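/- arXiv:2201.10992 — 10 statements merged into one kernel-verified Lean document; each statement's English description precedes it below -/
import Mathlib

section
/- Let a > 0, b ∈ (0,1), σ ∈ [0,1] and let F : ℝ → ℝ be given by F(y) = (1−σ)·y + 1/(exp(a·y)+1) − b. If a > 4(1−σ), then for every x ∈ ℝ one has 2·F′(x)·F‴(x) − 3·(F″(x))² < 0; in particular, at every point where F′(x) ≠ 0 the Schwarzian derivative SF(x) = F‴(x)/F′(x) − (3/2)·(F″(x)/F′(x))² is strictly negative. -/
open Real Filter Set

/-- The conjugate map `F(y) = (1-σ)y + 1/(exp(ay)+1) - b`. -/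
noncomputable def F (a b σ y : ℝ) : ℝ :=
  (1 - σ) * y + 1 / (Real.exp (a * y) + 1) - b

noncomputable def F1 (a σ x : ℝ) : ℝ :=
  (1 - σ) - a * Real.exp (a * x) / (Real.exp (a * x) + 1) ^ 2

noncomputable def F2 (a x : ℝ) : ℝ :=
  -(a ^ 2) * (Real.exp (a * x) * (1 - Real.exp (a * x))) / (Real.exp (a * x) + 1) ^ 3

noncomputable def F3 (a x : ℝ) : ℝ :=
  -(a ^ 3) * (Real.exp (a * x) * (1 - 4 * Real.exp (a * x) + Real.exp (a * x) ^ 2))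
    / (Real.exp (a * x) + 1) ^ 4

lemma exp_add_one_ne (a x : ℝ) : Real.exp (a * x) + 1 ≠ 0 := by positivity

lemma hasDerivAt_exp_ax (a x : ℝ) :
    HasDerivAt (fun y : ℝ => Real.exp (a * y)) (a * Real.exp (a * x)) x := by
  have h := ((hasDerivAt_id x).const_mul a).exp
  simpa [mul_comm] using h

lemma hasDerivAt_F (a b σ x : ℝ) : HasDerivAt (F a b σ) (F1 a σ x) x := by
  have he := hasDerivAt_exp_ax a x
  have hinv := (he.add_const 1).inv (exp_add_one_ne a x)
  have h := (((hasDerivAt_id x).const_mul (1 - σ)).add hinv).sub_const b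
  have hne := exp_add_one_ne a x
  refine HasDerivAt.congr_deriv (h.congr_of_eventuallyEq (Filter.Eventually.of_forall fun y => ?_)) ?_
  · simp [F, one_div]
  · unfold F1; field_simp; ring

lemma hasDerivAt_F1 (a σ x : ℝ) : HasDerivAt (F1 a σ) (F2 a x) x := by
  have he := hasDerivAt_exp_ax a x
  have hne : (Real.exp (a * x) + 1) ^ 2 ≠ 0 := pow_ne_zero _ (exp_add_one_ne a x)
  have hnum := he.const_mul a
  have hden := (he.add_const 1).pow 2
  have h := (hnum.div hden hne).const_sub (1 - σ)
  have hne' := exp_add_one_ne a x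
  refine h.congr_deriv ?_
  unfold F2; push_cast; simp only [Pi.pow_apply]; field_simp; ring

lemma hasDerivAt_F2 (a x : ℝ) : HasDerivAt (F2 a) (F3 a x) x := by
  have he := hasDerivAt_exp_ax a x
  have hne : (Real.exp (a * x) + 1) ^ 3 ≠ 0 := pow_ne_zero _ (exp_add_one_ne a x)
  have hnum := ((he.mul ((he.const_mul (-1)).add_const 1)).const_mul (-(a ^ 2)))
  have hden := (he.add_const 1).pow 3
  have h := hnum.div hden hne
  refine HasDerivAt.congr_deriv (h.congr_of_eventuallyEq (Filter.Eventually.of_forall fun y => ?_)) ?_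
  · simp [F2]; ring
  · have hne' := exp_add_one_ne a x
    unfold F3; simp only [Pi.pow_apply, Pi.mul_apply]; field_simp; ring

lemma deriv_F (a b σ : ℝ) : deriv (F a b σ) = F1 a σ :=
  funext fun x => (hasDerivAt_F a b σ x).deriv

lemma iteratedDeriv_two (a b σ : ℝ) : iteratedDeriv 2 (F a b σ) = F2 a := by
  rw [iteratedDeriv_succ, iteratedDeriv_one, deriv_F]
  exact funext fun x => (hasDerivAt_F1 a σ x).deriv

lemma iteratedDeriv_three (a b σ : ℝ) : iteratedDeriv 3 (F a b σ) = F3 a := by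
  rw [iteratedDeriv_succ, iteratedDeriv_two]
  exact funext fun x => (hasDerivAt_F2 a x).deriv

/-- If `a > 4(1-σ)` then `2 F' F''' - 3 (F'')² < 0` everywhere; in particular the
Schwarzian derivative of `F` is strictly negative wherever `F' ≠ 0`. -/
theorem schwarzian_negative (a b σ : ℝ) (ha : 0 < a) (hb : b ∈ Set.Ioo (0:ℝ) 1)
    (hσ : σ ∈ Set.Icc (0:ℝ) 1) (ha4 : 4 * (1 - σ) < a) :
    (∀ x : ℝ, 2 * deriv (F a b σ) x * iteratedDeriv 3 (F a b σ) x
      - 3 * (iteratedDeriv 2 (F a b σ) x) ^ 2 < 0) ∧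
    (∀ x : ℝ, deriv (F a b σ) x ≠ 0 →
      iteratedDeriv 3 (F a b σ) x / deriv (F a b σ) x
        - (3 / 2) * (iteratedDeriv 2 (F a b σ) x / deriv (F a b σ) x) ^ 2 < 0) := by
  have hmain : ∀ x : ℝ, 2 * F1 a σ x * F3 a x - 3 * (F2 a x) ^ 2 < 0 := by
    intro x
    set u := Real.exp (a * x) with hu
    have hupos : 0 < u := Real.exp_pos _
    have hne : u + 1 ≠ 0 := exp_add_one_ne a x
    have hcσ : 1 - σ ≥ 0 := by linarith [hσ.2]
    have key : 2 * F1 a σ x * F3 a x - 3 * (F2 a x) ^ 2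
        = -(a ^ 3 * u * (2 * (1 - σ) * (u - 1) ^ 2 + (a - 4 * (1 - σ)) * u))
          / (u + 1) ^ 4 := by
      unfold F1 F2 F3
      rw [← hu]
      field_simp
      ring
    rw [key]
    apply div_neg_of_neg_of_pos
    · have h1 : 0 < a ^ 3 * u * (2 * (1 - σ) * (u - 1) ^ 2 + (a - 4 * (1 - σ)) * u) := by
        have : 0 < 2 * (1 - σ) * (u - 1) ^ 2 + (a - 4 * (1 - σ)) * u := by
          nlinarith [sq_nonneg (u - 1)]
        positivity
      linarith
    · positivity
  refine ⟨?_, ?_⟩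
  · intro x
    rw [deriv_F, iteratedDeriv_two, iteratedDeriv_three]
    exact hmain x
  · intro x hx
    rw [deriv_F, iteratedDeriv_two, iteratedDeriv_three] at *
    have h := hmain x
    have hF1ne : F1 a σ x ≠ 0 := hx
    have hsq : 0 < F1 a σ x ^ 2 := by positivity
    have heq : F3 a x / F1 a σ x - 3 / 2 * (F2 a x / F1 a σ x) ^ 2
        = (2 * F1 a σ x * F3 a x - 3 * (F2 a x) ^ 2) / (2 * F1 a σ x ^ 2) := by
      field_simp
    rw [heq]
    exact div_neg_of_neg_of_pos h (by positivity)
end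

section
/- Let a > 0, b ∈ (0,1), σ ∈ [0,1]. The map h(x) = (1/a)·log((1−x)/x) is a diffeomorphism from the open interval (0,1) onto ℝ (in particular it is a continuous bijection with continuous inverse, differentiable with nonvanishing derivative), and it conjugates f_{a,b,σ} to F, i.e. h(f_{a,b,σ}(x)) = F(h(x)) for every x ∈ (0,1). -/
open Real Filter Set

/-- The EWA dynamics map `f_{a,b,σ}`. -/
noncomputable def f (a b σ x : ℝ) : ℝ :=
  x ^ (1 - σ) / (x ^ (1 - σ) + (1 - x) ^ (1 - σ) * Real.exp (a * (x - b)))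

/-- The conjugating map `h(x) = (1/a) log((1-x)/x)`. -/
noncomputable def hmap (a x : ℝ) : ℝ :=
  (1 / a) * Real.log ((1 - x) / x)

lemma gmem (a y : ℝ) : 1 / (Real.exp (a * y) + 1) ∈ Set.Ioo (0:ℝ) 1 := by
  have he : 0 < Real.exp (a * y) := Real.exp_pos _
  constructor
  · positivity
  · rw [div_lt_one (by linarith)]; linarith

lemma hmap_g (a : ℝ) (ha : 0 < a) (y : ℝ) :
    hmap a (1 / (Real.exp (a * y) + 1)) = y := by
  have he : 0 < Real.exp (a * y) := Real.exp_pos _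
  have h1 : (1 - 1 / (Real.exp (a * y) + 1)) / (1 / (Real.exp (a * y) + 1))
      = Real.exp (a * y) := by
    field_simp; ring
  rw [hmap, h1, Real.log_exp]
  field_simp

lemma g_hmap (a : ℝ) (ha : 0 < a) {x : ℝ} (hx : x ∈ Set.Ioo (0:ℝ) 1) :
    1 / (Real.exp (a * hmap a x) + 1) = x := by
  obtain ⟨hx0, hx1⟩ := hx
  have h1x : (0:ℝ) < 1 - x := by linarith
  have h1 : a * hmap a x = Real.log ((1 - x) / x) := by
    rw [hmap]; field_simp
  rw [h1, Real.exp_log (by positivity)]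
  field_simp; ring

/-- `h(x) = (1/a) log((1-x)/x)` is a diffeomorphism from `(0,1)` onto `ℝ` which
conjugates `f_{a,b,σ}` to `F`. -/
theorem hmap_diffeomorphism_conjugates (a b σ : ℝ) (ha : 0 < a)
    (hb : b ∈ Set.Ioo (0:ℝ) 1) (hσ : σ ∈ Set.Icc (0:ℝ) 1) :
    Set.BijOn (hmap a) (Set.Ioo 0 1) Set.univ ∧
    ContinuousOn (hmap a) (Set.Ioo 0 1) ∧
    (∀ x ∈ Set.Ioo (0:ℝ) 1, DifferentiableAt ℝ (hmap a) x ∧ deriv (hmap a) x ≠ 0) ∧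
    (∃ g : ℝ → ℝ, Continuous g ∧ (∀ x ∈ Set.Ioo (0:ℝ) 1, g (hmap a x) = x) ∧
      ∀ y : ℝ, g y ∈ Set.Ioo (0:ℝ) 1 ∧ hmap a (g y) = y) ∧
    (∀ x ∈ Set.Ioo (0:ℝ) 1, hmap a (f a b σ x) = F a b σ (hmap a x)) := by
  set g : ℝ → ℝ := fun y => 1 / (Real.exp (a * y) + 1) with hg
  have hgh : ∀ x ∈ Set.Ioo (0:ℝ) 1, g (hmap a x) = x := fun x hx => g_hmap a ha hx
  refine ⟨⟨fun x _ => trivial, ?_, ?_⟩, ?_, ?_, ⟨g, ?_, hgh, fun y => ⟨gmem a y, hmap_g a ha y⟩⟩, ?_⟩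

  · intro x hx y hy hxy
    rw [← hgh x hx, ← hgh y hy, hxy]
  · intro y _
    exact ⟨g y, gmem a y, hmap_g a ha y⟩
  · apply ContinuousOn.mul continuousOn_const
    apply ContinuousOn.log
    · exact ContinuousOn.div (by fun_prop) continuousOn_id (fun x hx => ne_of_gt hx.1)
    · intro x hx
      have h0 := hx.1
      have h1 : (0:ℝ) < 1 - x := by linarith [hx.2]
      positivity
  · intro x hx
    obtain ⟨hx0, hx1⟩ := hx
    have h1x : (0:ℝ) < 1 - x := by linarith
    have hnum : HasDerivAt (fun x : ℝ => 1 - x) (-1) x := by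
      simpa using (hasDerivAt_id x).const_sub 1
    have hu : HasDerivAt (fun x : ℝ => (1 - x) / x) (((-1) * x - (1 - x) * 1) / x ^ 2) x :=
      hnum.div (hasDerivAt_id x) hx0.ne'
    have hlog : HasDerivAt (fun x : ℝ => Real.log ((1 - x) / x))
        ((((-1) * x - (1 - x) * 1) / x ^ 2) / ((1 - x) / x)) x :=
      hu.log (div_pos h1x hx0).ne'
    have hh : HasDerivAt (hmap a)
        ((1 / a) * ((((-1) * x - (1 - x) * 1) / x ^ 2) / ((1 - x) / x))) x :=
      hlog.const_mul (1 / a)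
    refine ⟨hh.differentiableAt, ?_⟩
    rw [hh.deriv]
    have hN : ((-1:ℝ) * x - (1 - x) * 1) = -1 := by ring
    rw [hN]
    apply mul_ne_zero (by positivity)
    apply div_ne_zero
    · exact div_ne_zero (by norm_num) (by positivity)
    · exact (div_pos h1x hx0).ne'
  · exact continuous_const.div (by fun_prop)
      (fun y => by have := Real.exp_pos (a * y); positivity)
  · intro x hx
    obtain ⟨hx0, hx1⟩ := hx
    have h1x : (0:ℝ) < 1 - x := by linarith
    have hxp : (0:ℝ) < x ^ (1 - σ) := Real.rpow_pos_of_pos hx0 _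
    have h1xp : (0:ℝ) < (1 - x) ^ (1 - σ) := Real.rpow_pos_of_pos h1x _
    have hep : (0:ℝ) < Real.exp (a * (x - b)) := Real.exp_pos _
    set D := x ^ (1 - σ) + (1 - x) ^ (1 - σ) * Real.exp (a * (x - b)) with hD
    have hDp : 0 < D := by positivity
    have hf : f a b σ x = x ^ (1 - σ) / D := rfl
    have h1f : 1 - f a b σ x = (1 - x) ^ (1 - σ) * Real.exp (a * (x - b)) / D := by
      rw [hf]; field_simp; rw [hD]; ring
    have hratio : (1 - f a b σ x) / f a b σ x
        = (1 - x) ^ (1 - σ) * Real.exp (a * (x - b)) / x ^ (1 - σ) := by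
      rw [h1f, hf]
      field_simp
    have hlogr : Real.log ((1 - f a b σ x) / f a b σ x)
        = (1 - σ) * Real.log (1 - x) + a * (x - b) - (1 - σ) * Real.log x := by
      rw [hratio, Real.log_div (by positivity) hxp.ne',
        Real.log_mul h1xp.ne' hep.ne', Real.log_exp,
        Real.log_rpow h1x, Real.log_rpow hx0]
    have hhx : hmap a x = (1 / a) * (Real.log (1 - x) - Real.log x) := by
      rw [hmap, Real.log_div h1x.ne' hx0.ne']
    have hghx : 1 / (Real.exp (a * hmap a x) + 1) = x := g_hmap a ha ⟨hx0, hx1⟩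
    rw [hmap, hlogr, F, hghx, hhx]
    field_simp
    ring
end

section
/- Let a > 0, b ∈ (0,1), σ ∈ [0,1]. The map F(y) = (1−σ)·y + 1/(exp(a·y)+1) − b has exactly one fixed point in ℝ; equivalently, the map f_{a,b,σ} has exactly one fixed point in the open interval (0,1). -/
open Real Filter Set

noncomputable def G (a b σ y : ℝ) : ℝ := σ * y + (b - 1 / (Real.exp (a * y) + 1))

noncomputable def H (a b σ x : ℝ) : ℝ := a * (x - b) + σ * (Real.log x - Real.log (1 - x))

lemma G_strictMono (a b σ : ℝ) (ha : 0 < a) (hσ : 0 ≤ σ) : StrictMono (G a b σ) := by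
  have h1 : StrictMono (fun y : ℝ => b - 1 / (Real.exp (a * y) + 1)) := by
    intro x y hxy
    have he : Real.exp (a * x) < Real.exp (a * y) :=
      Real.exp_lt_exp.2 (by nlinarith)
    have hp : 0 < Real.exp (a * x) + 1 := by positivity
    have : 1 / (Real.exp (a * y) + 1) < 1 / (Real.exp (a * x) + 1) :=
      one_div_lt_one_div_of_lt hp (by linarith)
    simp only
    linarith
  have h2 : Monotone (fun y : ℝ => σ * y) := fun x y hxy => by
    simpa using mul_le_mul_of_nonneg_left hxy hσ
  exact h2.add_strictMono h1

lemma G_cont (a b σ : ℝ) : Continuous (G a b σ) := by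
  unfold G
  refine (continuous_const.mul continuous_id).add (continuous_const.sub ?_)
  exact continuous_const.div (by continuity) (fun y => by positivity)

lemma F_fixed_iff (a b σ y : ℝ) : F a b σ y = y ↔ G a b σ y = 0 := by
  unfold F G
  constructor <;> intro h <;> linarith

lemma H_strictMonoOn (a b σ : ℝ) (ha : 0 < a) (hσ : 0 ≤ σ) :
    StrictMonoOn (H a b σ) (Set.Ioo (0:ℝ) 1) := by
  intro x hx y hy hxy
  have hlx : Real.log x ≤ Real.log y := Real.log_le_log hx.1 hxy.le
  have hly : Real.log (1 - y) ≤ Real.log (1 - x) :=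
    Real.log_le_log (by linarith [hy.2]) (by linarith)
  have h1 : a * (x - b) < a * (y - b) := by nlinarith
  have h2 : σ * (Real.log x - Real.log (1 - x)) ≤ σ * (Real.log y - Real.log (1 - y)) :=
    mul_le_mul_of_nonneg_left (by linarith) hσ
  unfold H
  linarith

lemma f_fixed_iff (a b σ x : ℝ) (hx : x ∈ Set.Ioo (0:ℝ) 1) :
    f a b σ x = x ↔ H a b σ x = 0 := by
  obtain ⟨hx0, hx1⟩ := hx
  have h1x : 0 < 1 - x := by linarith
  have hu : 0 < x ^ (1 - σ) := Real.rpow_pos_of_pos hx0 _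
  have hv : 0 < (1 - x) ^ (1 - σ) := Real.rpow_pos_of_pos h1x _
  have hE : 0 < Real.exp (a * (x - b)) := Real.exp_pos _
  have hD : 0 < x ^ (1 - σ) + (1 - x) ^ (1 - σ) * Real.exp (a * (x - b)) := by positivity
  set u := x ^ (1 - σ) with hu'
  set v := (1 - x) ^ (1 - σ) with hv'
  set E := Real.exp (a * (x - b)) with hE'
  have step1 : f a b σ x = x ↔ u * (1 - x) = x * (v * E) := by
    unfold f
    rw [div_eq_iff hD.ne']
    constructor <;> intro h <;> nlinarith
  have hA : 0 < u * (1 - x) := by positivity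
  have hB : 0 < x * (v * E) := by positivity
  have step2 : u * (1 - x) = x * (v * E) ↔
      Real.log (u * (1 - x)) = Real.log (x * (v * E)) := by
    constructor
    · intro h; rw [h]
    · intro h
      have := congrArg Real.exp h
      rwa [Real.exp_log hA, Real.exp_log hB] at this
  rw [step1, step2, Real.log_mul hu.ne' h1x.ne', Real.log_mul hx0.ne' (mul_pos hv hE).ne',
    Real.log_mul hv.ne' hE.ne', hu', hv', hE', Real.log_rpow hx0, Real.log_rpow h1x,
    Real.log_exp]
  unfold H
  constructor <;> intro h <;> nlinarith

lemma H_contAt (a b σ x : ℝ) (hx0 : x ≠ 0) (hx1 : (1:ℝ) - x ≠ 0) :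
    ContinuousAt (H a b σ) x := by
  unfold H
  refine ((continuousAt_id.sub continuousAt_const).const_mul a).add
    (((Real.continuousAt_log hx0).sub ?_).const_mul σ)
  exact (Real.continuousAt_log hx1).comp (continuousAt_const.sub continuousAt_id)


lemma G_neg (a b σ y : ℝ) (hb0 : 0 < b) (h1 : σ * y ≤ 0)
    (h3 : Real.exp (a * y) < (1 - b) / b) : G a b σ y < 0 := by
  have hp : 0 < Real.exp (a * y) + 1 := by positivity
  rw [lt_div_iff₀ hb0] at h3
  have h4 : b < 1 / (Real.exp (a * y) + 1) := by
    rw [lt_div_iff₀ hp]; nlinarith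
  unfold G; linarith

lemma G_pos (a b σ y : ℝ) (hb0 : 0 < b) (h1 : 0 ≤ σ * y)
    (h3 : (1 - b) / b < Real.exp (a * y)) : 0 < G a b σ y := by
  have hp : 0 < Real.exp (a * y) + 1 := by positivity
  rw [div_lt_iff₀ hb0] at h3
  have h4 : 1 / (Real.exp (a * y) + 1) < b := by
    rw [div_lt_iff₀ hp]; nlinarith
  unfold G; linarith

/-- `F` has exactly one fixed point in `ℝ`; equivalently `f_{a,b,σ}` has exactly one
fixed point in `(0,1)`. -/
theorem unique_fixed_point (a b σ : ℝ) (ha : 0 < a) (hb : b ∈ Set.Ioo (0:ℝ) 1)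
    (hσ : σ ∈ Set.Icc (0:ℝ) 1) :
    (∃! y : ℝ, F a b σ y = y) ∧
    (∃! x : ℝ, x ∈ Set.Ioo (0:ℝ) 1 ∧ f a b σ x = x) := by
  obtain ⟨hb0, hb1⟩ := hb
  obtain ⟨hσ0, hσ1⟩ := hσ
  constructor
  · -- Part 1
    set L := Real.log ((1 - b) / b) / a with hL
    set y₀ := min 0 L - 1 with hy₀
    set y₁ := max 0 L + 1 with hy₁
    have hy01 : y₀ ≤ y₁ := by
      have := min_le_max (a := (0:ℝ)) (b := L); dsimp [y₀, y₁]; linarith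
    have hratio : (0:ℝ) < (1 - b) / b := div_pos (by linarith) hb0
    have hG0 : G a b σ y₀ < 0 := by
      have hyneg : y₀ < 0 := by
        have : min 0 L ≤ 0 := min_le_left _ _
        dsimp [y₀]; linarith
      have h2 : a * y₀ < Real.log ((1 - b) / b) := by
        have hyL : y₀ < L := by
          have : min 0 L ≤ L := min_le_right _ _
          dsimp [y₀]; linarith
        have hLa : a * L = Real.log ((1 - b) / b) := by rw [hL]; field_simp [ha.ne']
        nlinarith
      have h3 : Real.exp (a * y₀) < (1 - b) / b := by
        calc Real.exp (a * y₀) < Real.exp (Real.log ((1 - b) / b)) := Real.exp_lt_exp.2 h2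
          _ = (1 - b) / b := Real.exp_log hratio
      exact G_neg a b σ y₀ hb0 (mul_nonpos_of_nonneg_of_nonpos hσ0 hyneg.le) h3
    have hG1 : 0 < G a b σ y₁ := by
      have hypos : 0 < y₁ := by
        have : (0:ℝ) ≤ max 0 L := le_max_left _ _
        dsimp [y₁]; linarith
      have h2 : Real.log ((1 - b) / b) < a * y₁ := by
        have hyL : L < y₁ := by
          have : L ≤ max 0 L := le_max_right _ _
          dsimp [y₁]; linarith
        have hLa : a * L = Real.log ((1 - b) / b) := by rw [hL]; field_simp [ha.ne']
        nlinarith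
      have h3 : (1 - b) / b < Real.exp (a * y₁) := by
        calc (1 - b) / b = Real.exp (Real.log ((1 - b) / b)) := (Real.exp_log hratio).symm
          _ < Real.exp (a * y₁) := Real.exp_lt_exp.2 h2
      exact G_pos a b σ y₁ hb0 (mul_nonneg hσ0 hypos.le) h3
    have hivt := intermediate_value_Icc hy01 (G_cont a b σ).continuousOn
    have h0mem : (0:ℝ) ∈ Set.Icc (G a b σ y₀) (G a b σ y₁) := ⟨hG0.le, hG1.le⟩
    obtain ⟨y, _, hy⟩ := hivt h0mem
    refine ⟨y, (F_fixed_iff a b σ y).mpr hy, fun z hz => ?_⟩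
    exact (G_strictMono a b σ ha hσ0).injective (((F_fixed_iff a b σ z).mp hz).trans hy.symm)
  · -- Part 2
    set x₀ := min b (1/2) / 2 with hx₀
    set x₁ := (max b (1/2) + 1) / 2 with hx₁
    have hm0 : 0 < min b (1/2) := lt_min hb0 (by norm_num)
    have hM1 : max b (1/2) < 1 := max_lt hb1 (by norm_num)
    have hx₀0 : 0 < x₀ := by dsimp [x₀]; linarith
    have hx₀b : x₀ < b := by
      have : min b (1/2) ≤ b := min_le_left _ _
      dsimp [x₀]; linarith
    have hx₀half : x₀ ≤ 1/2 := by
      have : min b (1/2) ≤ 1/2 := min_le_right _ _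
      dsimp [x₀]; linarith
    have hx₁1 : x₁ < 1 := by dsimp [x₁]; linarith
    have hx₁b : b < x₁ := by
      have h1 : b ≤ max b (1/2) := le_max_left _ _
      dsimp [x₁]; linarith
    have hx₁half : 1/2 ≤ x₁ := by
      have : (1:ℝ)/2 ≤ max b (1/2) := le_max_right _ _
      dsimp [x₁]; linarith
    have hx₀1 : x₀ < 1 := by linarith
    have hx₁0 : 0 < x₁ := by linarith
    have hx01 : x₀ ≤ x₁ := by linarith
    have hH0 : H a b σ x₀ < 0 := by
      have h1 : Real.log x₀ ≤ Real.log (1 - x₀) := Real.log_le_log hx₀0 (by linarith)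
      have h2 : σ * (Real.log x₀ - Real.log (1 - x₀)) ≤ 0 :=
        mul_nonpos_of_nonneg_of_nonpos hσ0 (by linarith)
      have h3 : a * (x₀ - b) < 0 := by nlinarith
      unfold H; linarith
    have hH1 : 0 < H a b σ x₁ := by
      have h1 : Real.log (1 - x₁) ≤ Real.log x₁ :=
        Real.log_le_log (by linarith) (by linarith)
      have h2 : 0 ≤ σ * (Real.log x₁ - Real.log (1 - x₁)) :=
        mul_nonneg hσ0 (by linarith)
      have h3 : 0 < a * (x₁ - b) := by nlinarith
      unfold H; linarith
    have hcont : ContinuousOn (H a b σ) (Set.Icc x₀ x₁) := fun x hx =>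
      (H_contAt a b σ x (by nlinarith [hx.1] : x ≠ 0) (by nlinarith [hx.2] : (1:ℝ) - x ≠ 0)).continuousWithinAt
    have hivt := intermediate_value_Icc hx01 hcont
    obtain ⟨c, hcmem, hc⟩ := hivt ⟨hH0.le, hH1.le⟩
    have hcIoo : c ∈ Set.Ioo (0:ℝ) 1 := ⟨lt_of_lt_of_le hx₀0 hcmem.1, lt_of_le_of_lt hcmem.2 hx₁1⟩
    refine ⟨c, ⟨hcIoo, (f_fixed_iff a b σ c hcIoo).mpr hc⟩, fun z ⟨hzIoo, hz⟩ => ?_⟩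
    exact (H_strictMonoOn a b σ ha hσ0).injOn hzIoo hcIoo
      (((f_fixed_iff a b σ z hzIoo).mp hz).trans hc.symm)
end

section
/- Let b ∈ (0,1) and σ ∈ (0,1]. For each a > 0 let x̄(a) denote the unique fixed point of f_{a,b,σ} in (0,1). Then x̄(a) lies between 1/2 and b, i.e. min(b, 1/2) ≤ x̄(a) ≤ max(b, 1/2); moreover x̄(a) → 1/2 as a → 0⁺ and x̄(a) → b as a → ∞. Finally, if σ = 0, then for every a > 0 the point b is the unique fixed point of f_{a,b,0} in (0,1). -/
open Real Filter Set

lemma fixed_eq (a b σ x : ℝ) (hx0 : 0 < x) (hx1 : x < 1)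
    (hf : f a b σ x = x) :
    a * (x - b) = σ * (Real.log (1 - x) - Real.log x) := by
  have h1x : 0 < 1 - x := by linarith
  set t := x ^ (1 - σ) with ht
  set s := (1 - x) ^ (1 - σ) with hs
  have htpos : 0 < t := Real.rpow_pos_of_pos hx0 _
  have hspos : 0 < s := Real.rpow_pos_of_pos h1x _
  set E := Real.exp (a * (x - b)) with hEdef
  have hEpos : 0 < E := Real.exp_pos _
  have hD : 0 < t + s * E := by positivity
  have hf' : t = x * (t + s * E) := by
    have h := hf
    unfold f at h
    rw [← ht, ← hs, ← hEdef, div_eq_iff hD.ne'] at h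
    linarith [h]
  have hE : E = t * (1 - x) / (x * s) := by
    rw [eq_div_iff (by positivity)]
    nlinarith [hf']
  have hlog := congrArg Real.log hE
  rw [hEdef, Real.log_exp, Real.log_div (by positivity) (by positivity),
    Real.log_mul htpos.ne' h1x.ne', Real.log_mul hx0.ne' hspos.ne',
    ht, hs, Real.log_rpow hx0, Real.log_rpow h1x] at hlog
  rw [hlog]; ring

/-- anti-monotonicity of `x ↦ log(1-x) - log x` on (0,1) -/
lemma L_anti {x y : ℝ} (hx : 0 < x) (hxy : x ≤ y) (hy : y < 1) :
    Real.log (1 - y) - Real.log y ≤ Real.log (1 - x) - Real.log x := by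
  have h1 : Real.log (1 - y) ≤ Real.log (1 - x) :=
    Real.log_le_log (by linarith) (by linarith)
  have h2 : Real.log x ≤ Real.log y := Real.log_le_log hx hxy
  linarith

/-- The perturbed equilibrium `x̄(a)` lies between `1/2` and `b`, tends to `1/2` as
`a → 0⁺` and to `b` as `a → ∞`; and for `σ = 0`, `b` is the unique fixed point. -/
theorem perturbed_equilibrium_location (b σ : ℝ) (hb : b ∈ Set.Ioo (0:ℝ) 1)
    (hσ : σ ∈ Set.Ioc (0:ℝ) 1) (xbar : ℝ → ℝ)
    (hfix : ∀ a > (0:ℝ), xbar a ∈ Set.Ioo (0:ℝ) 1 ∧ f a b σ (xbar a) = xbar a) :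
    (∀ a > (0:ℝ), min b (1/2) ≤ xbar a ∧ xbar a ≤ max b (1/2)) ∧
    Filter.Tendsto xbar (nhdsWithin 0 (Set.Ioi 0)) (nhds (1/2)) ∧
    Filter.Tendsto xbar Filter.atTop (nhds b) ∧
    (∀ a > (0:ℝ), f a b 0 b = b ∧
      ∀ x ∈ Set.Ioo (0:ℝ) 1, f a b 0 x = x → x = b) := by
  obtain ⟨hb0, hb1⟩ := hb
  obtain ⟨hσ0, hσ1⟩ := hσ
  have key : ∀ a > (0:ℝ),
      a * (xbar a - b) = σ * (Real.log (1 - xbar a) - Real.log (xbar a)) :=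
    fun a ha => fixed_eq a b σ (xbar a) (hfix a ha).1.1 (hfix a ha).1.2 (hfix a ha).2
  have bound : ∀ a > (0:ℝ), min b (1/2) ≤ xbar a ∧ xbar a ≤ max b (1/2) := by
    intro a ha
    obtain ⟨⟨hx0, hx1⟩, _⟩ := hfix a ha
    have hk := key a ha
    constructor
    · rcases le_or_gt b (xbar a) with h | h
      · exact le_trans (min_le_left _ _) h
      · have hlhs : a * (xbar a - b) < 0 := mul_neg_of_pos_of_neg ha (by linarith)
        have hlog : Real.log (1 - xbar a) - Real.log (xbar a) < 0 := by
          by_contra hc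
          push_neg at hc
          nlinarith
        have : Real.log (1 - xbar a) < Real.log (xbar a) := by linarith
        have hxx : 1 - xbar a < xbar a := by
          by_contra hc
          push_neg at hc
          have := Real.log_le_log hx0 hc
          linarith
        exact le_trans (min_le_right _ _) (by linarith)
    · rcases le_or_gt (xbar a) b with h | h
      · exact le_trans h (le_max_left _ _)
      · have hlhs : 0 < a * (xbar a - b) := mul_pos ha (by linarith)
        have hlog : 0 < Real.log (1 - xbar a) - Real.log (xbar a) := by
          by_contra hc
          push_neg at hc
          nlinarith
        have : Real.log (xbar a) < Real.log (1 - xbar a) := by linarith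
        have hxx : xbar a < 1 - xbar a := by
          by_contra hc
          push_neg at hc
          have := Real.log_le_log (by linarith) hc
          linarith
        exact le_trans (by linarith) (le_max_right _ _)
  refine ⟨bound, ?_, ?_, ?_⟩
  · -- a → 0⁺
    rw [Metric.tendsto_nhdsWithin_nhds]
    intro ε hε
    set e := min ε (1/4) with he
    have he0 : 0 < e := lt_min hε (by norm_num)
    have he4 : e ≤ 1/4 := min_le_right _ _
    have heε : e ≤ ε := min_le_left _ _
    have h1 : (0:ℝ) < 1/2 - e := by linarith
    have h2 : (1:ℝ)/2 + e < 1 := by linarith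
    set c := σ * (Real.log (1/2 + e) - Real.log (1/2 - e)) with hc
    have hcpos : 0 < c := by
      apply mul_pos hσ0
      have := Real.log_lt_log h1 (show (1/2 - e : ℝ) < 1/2 + e by linarith)
      linarith
    refine ⟨c, hcpos, ?_⟩
    intro a ha hda
    have ha' : 0 < a := ha
    rw [Real.dist_eq] at hda ⊢
    have hac : a < c := by
      rwa [sub_zero, abs_of_pos ha'] at hda
    obtain ⟨⟨hx0, hx1⟩, _⟩ := hfix a ha'
    have hk := key a ha'
    have hub : a * (xbar a - b) < a := by nlinarith
    have hlb : -a < a * (xbar a - b) := by nlinarith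
    have hlow : 1/2 - e < xbar a := by
      by_contra hcon
      push_neg at hcon
      have hL : Real.log (1 - xbar a) - Real.log (xbar a) ≥
          Real.log (1 - (1/2 - e)) - Real.log (1/2 - e) := L_anti hx0 hcon (by linarith)
      rw [show (1:ℝ) - (1/2 - e) = 1/2 + e by ring] at hL
      nlinarith
    have hhigh : xbar a < 1/2 + e := by
      by_contra hcon
      push_neg at hcon
      have hL : Real.log (1 - (1/2 + e)) - Real.log (1/2 + e) ≥
          Real.log (1 - xbar a) - Real.log (xbar a) := L_anti (by linarith) hcon hx1
      rw [show (1:ℝ) - (1/2 + e) = 1/2 - e by ring] at hL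
      nlinarith
    rw [abs_sub_lt_iff]
    constructor <;> linarith
  · -- a → ∞
    rw [Metric.tendsto_atTop]
    intro ε hε
    set m := min b (1/2) with hm
    set M := max b (1/2) with hM
    have hm0 : 0 < m := lt_min hb0 (by norm_num)
    have hM1 : M < 1 := max_lt hb1 (by norm_num)
    have hmM : m ≤ M := min_le_max
    set C := |Real.log (1 - m) - Real.log m| + |Real.log (1 - M) - Real.log M| with hC
    have hC0 : 0 ≤ C := by positivity
    refine ⟨max 1 ((C + 1) / ε), ?_⟩
    intro a haN
    have ha1 : (1:ℝ) ≤ a := le_trans (le_max_left _ _) haN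
    have ha' : 0 < a := by linarith
    have haC : (C + 1) / ε ≤ a := le_trans (le_max_right _ _) haN
    obtain ⟨⟨hx0, hx1⟩, _⟩ := hfix a ha'
    obtain ⟨hbl, hbu⟩ := bound a ha'
    have hk := key a ha'
    have hLub : Real.log (1 - xbar a) - Real.log (xbar a) ≤
        Real.log (1 - m) - Real.log m := L_anti hm0 hbl hx1
    have hLlb : Real.log (1 - M) - Real.log M ≤
        Real.log (1 - xbar a) - Real.log (xbar a) := L_anti hx0 hbu hM1
    have habs : |Real.log (1 - xbar a) - Real.log (xbar a)| ≤ C := by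
      rw [abs_le]
      constructor
      · have := neg_abs_le (Real.log (1 - M) - Real.log M)
        have h2 := abs_nonneg (Real.log (1 - m) - Real.log m)
        linarith
      · have := le_abs_self (Real.log (1 - m) - Real.log m)
        have h2 := abs_nonneg (Real.log (1 - M) - Real.log M)
        linarith
    have hxb : |xbar a - b| ≤ C / a := by
      have h1 : a * |xbar a - b| = |a * (xbar a - b)| := by
        rw [abs_mul, abs_of_pos ha']
      have h2 : |a * (xbar a - b)| ≤ C := by
        rw [hk, abs_mul]
        calc |σ| * |Real.log (1 - xbar a) - Real.log (xbar a)|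
            ≤ 1 * C := by
              apply mul_le_mul (by rw [abs_of_pos hσ0]; exact hσ1) habs (abs_nonneg _) zero_le_one
          _ = C := one_mul C
      rw [le_div_iff₀ ha', mul_comm]
      linarith [h1, h2]
    rw [Real.dist_eq]
    have : C / a < ε := by
      rw [div_lt_iff₀ ha']
      have : (C + 1) ≤ ε * a := by
        rw [div_le_iff₀ hε] at haC
        linarith [haC]
      linarith
    linarith [hxb]
  · -- σ = 0 part
    intro a ha
    constructor
    · unfold f
      rw [sub_zero, Real.rpow_one, Real.rpow_one, sub_self, mul_zero, Real.exp_zero, mul_one,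
        show b + (1 - b) = 1 by ring, div_one]
    · intro x hx hfx
      have hk := fixed_eq a b 0 x hx.1 hx.2 hfx
      rw [zero_mul] at hk
      rcases mul_eq_zero.mp hk with h | h
      · linarith
      · linarith
end

section
/- Let b ∈ (0,1) with b ≠ 1/2, σ ∈ (0,1], and suppose x̄ : (0,∞) → (0,1) is a differentiable function such that for every a > 0, x̄(a) is a fixed point of f_{a,b,σ}. Then for every a > 0: if b < 1/2 then x̄′(a) < 0, and if b > 1/2 then x̄′(a) > 0; equivalently, (1 − 2·x̄(a))·x̄′(a) < 0 for all a > 0. -/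
open Real Filter Set

/-- Monotonicity of the perturbed equilibrium in the intensity of choice `a`:
if `b < 1/2` then `x̄` is decreasing, and if `b > 1/2` then `x̄` is increasing. -/
theorem perturbed_equilibrium_monotone (b σ : ℝ) (hb : b ∈ Set.Ioo (0:ℝ) 1)
    (hb' : b ≠ 1/2) (hσ : σ ∈ Set.Ioc (0:ℝ) 1) (xbar : ℝ → ℝ)
    (hdiff : ∀ a > (0:ℝ), DifferentiableAt ℝ xbar a)
    (hmem : ∀ a > (0:ℝ), xbar a ∈ Set.Ioo (0:ℝ) 1)
    (hfix : ∀ a > (0:ℝ), f a b σ (xbar a) = xbar a) :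
    ∀ a > (0:ℝ),
      (b < 1/2 → deriv xbar a < 0) ∧
      (b > 1/2 → 0 < deriv xbar a) ∧
      (1 - 2 * xbar a) * deriv xbar a < 0 := by
  -- Key equation: a * (x̄ a - b) = σ * (log (1 - x̄ a) - log (x̄ a))
  have hkey : ∀ a > (0:ℝ), a * (xbar a - b)
      = σ * (Real.log (1 - xbar a) - Real.log (xbar a)) := by
    intro a ha
    obtain ⟨hx0, hx1⟩ := hmem a ha
    set x := xbar a with hxdef
    have h1x : 0 < 1 - x := by linarith
    have hp : 0 < x ^ (1 - σ) := Real.rpow_pos_of_pos hx0 _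
    have hq : 0 < (1 - x) ^ (1 - σ) := Real.rpow_pos_of_pos h1x _
    have hE : 0 < Real.exp (a * (x - b)) := Real.exp_pos _
    have hden : 0 < x ^ (1 - σ) + (1 - x) ^ (1 - σ) * Real.exp (a * (x - b)) := by
      positivity
    have hfx := hfix a ha
    rw [f, div_eq_iff hden.ne'] at hfx
    -- p(1-x) = x * q * E
    have hmul : x ^ (1 - σ) * (1 - x)
        = x * ((1 - x) ^ (1 - σ) * Real.exp (a * (x - b))) := by linear_combination hfx
    have hlog := congrArg Real.log hmul
    rw [Real.log_mul hp.ne' h1x.ne', Real.log_mul hx0.ne' (by positivity),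
      Real.log_mul hq.ne' hE.ne', Real.log_rpow hx0, Real.log_rpow h1x,
      Real.log_exp] at hlog
    linarith
  intro a ha
  obtain ⟨hx0, hx1⟩ := hmem a ha
  set x := xbar a with hxdef
  set x' := deriv xbar a with hx'def
  have h1x : 0 < 1 - x := by linarith
  -- derivative of F t = t*(xbar t - b) - σ*(log(1-xbar t) - log (xbar t))
  have hxd : HasDerivAt xbar x' a := (hdiff a ha).hasDerivAt
  have h1 : HasDerivAt (fun t => t * (xbar t - b)) (1 * (x - b) + a * x') a :=
    (hasDerivAt_id a).mul (hxd.sub_const b)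
  have h2 : HasDerivAt (fun t => Real.log (1 - xbar t)) ((0 - x') / (1 - x)) a :=
    ((hasDerivAt_const a (1:ℝ)).sub hxd).log h1x.ne'
  have h3 : HasDerivAt (fun t => Real.log (xbar t)) (x' / x) a := hxd.log hx0.ne'
  have hF : HasDerivAt
      (fun t => t * (xbar t - b) - σ * (Real.log (1 - xbar t) - Real.log (xbar t)))
      (1 * (x - b) + a * x' - σ * ((0 - x') / (1 - x) - x' / x)) a :=
    h1.sub ((h2.sub h3).const_mul σ)
  have heq0 : (fun t => t * (xbar t - b) - σ * (Real.log (1 - xbar t) - Real.log (xbar t)))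
      =ᶠ[nhds a] (fun _ => (0:ℝ)) := by
    filter_upwards [IsOpen.mem_nhds isOpen_Ioi ha] with t ht
    have := hkey t ht
    linarith
  have hder0 : (1 * (x - b) + a * x' - σ * ((0 - x') / (1 - x) - x' / x)) = 0 := by
    have := hF.deriv
    rw [heq0.deriv_eq] at this
    simpa using this.symm
  obtain ⟨hσ0, hσ1⟩ := hσ
  have hD : 0 < a + σ / (1 - x) + σ / x := by positivity
  have hxD : x' * (a + σ / (1 - x) + σ / x) = b - x := by
    field_simp at hder0 ⊢
    linear_combination hder0
  have hkeya := hkey a ha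
  -- case analysis
  rcases lt_or_gt_of_ne hb' with hblt | hbgt
  · -- b < 1/2 : show b < x and x < 1/2
    have hbx : b < x := by
      by_contra h
      push_neg at h
      have hL : Real.log (1 - x) - Real.log x ≤ 0 := by
        nlinarith [hkeya, mul_nonpos_of_nonneg_of_nonpos ha.le (by linarith : x - b ≤ 0)]
      have : 1 - x ≤ x := by
        have := (Real.log_le_log_iff h1x hx0).mp (by linarith)
        linarith
      linarith
    have hx' : x' < 0 := by nlinarith [hxD, hD]
    have hxhalf : x < 1/2 := by
      have hL : 0 < Real.log (1 - x) - Real.log x := by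
        nlinarith [hkeya, mul_pos ha (by linarith : (0:ℝ) < x - b)]
      have : x < 1 - x := (Real.log_lt_log_iff hx0 h1x).mp (by linarith)
      linarith
    refine ⟨fun _ => hx', fun h => absurd h (by linarith), ?_⟩
    have h2x : 0 < 1 - 2 * x := by linarith
    exact mul_neg_of_pos_of_neg h2x hx'
  · -- b > 1/2 : show x < b and x > 1/2
    have hbx : x < b := by
      by_contra h
      push_neg at h
      have hL : 0 ≤ Real.log (1 - x) - Real.log x := by
        nlinarith [hkeya, mul_nonneg ha.le (by linarith : (0:ℝ) ≤ x - b)]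
      have : x ≤ 1 - x := by
        have := (Real.log_le_log_iff hx0 h1x).mp (by linarith)
        linarith
      linarith
    have hx' : 0 < x' := by nlinarith [hxD, hD]
    have hxhalf : 1/2 < x := by
      have hL : Real.log (1 - x) - Real.log x < 0 := by
        nlinarith [hkeya, mul_neg_of_pos_of_neg ha (by linarith : x - b < 0)]
      have : 1 - x < x := (Real.log_lt_log_iff h1x hx0).mp (by linarith)
      linarith
    refine ⟨fun h => absurd h (by linarith), fun _ => hx', ?_⟩
    have h2x : 1 - 2 * x < 0 := by linarith
    exact mul_neg_of_neg_of_pos h2x hx'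
end

section
/- Let a > 0, b ∈ (0,1), σ ∈ [0,1), and let F(y) = (1−σ)·y + 1/(exp(a·y)+1) − b with unique fixed point ȳ ∈ ℝ. If for every x < ȳ the iterates Fⁿ(x) converge to ȳ, then for every x ∈ ℝ the iterates Fⁿ(x) converge to ȳ. Similarly, if for every x > ȳ the iterates Fⁿ(x) converge to ȳ, then for every x ∈ ℝ the iterates Fⁿ(x) converge to ȳ. -/
open Real Filter Set

lemma F_cont (a b σ : ℝ) : Continuous (F a b σ) := by
  unfold F
  have h : ∀ y : ℝ, Real.exp (a * y) + 1 ≠ 0 := fun y =>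
    ne_of_gt (by positivity)
  exact (((continuous_const.mul continuous_id).add
    (continuous_const.div ((Real.continuous_exp.comp (continuous_const.mul continuous_id)).add
      continuous_const) h)).sub continuous_const)

lemma g_anti {a : ℝ} (ha : 0 < a) {y z : ℝ} (hyz : y < z) :
    1 / (Real.exp (a * z) + 1) < 1 / (Real.exp (a * y) + 1) := by
  apply one_div_lt_one_div_of_lt (by positivity)
  have := Real.exp_lt_exp.2 (mul_lt_mul_of_pos_left hyz ha)
  linarith

lemma F_unique_fix (a b σ : ℝ) (ha : 0 < a) (hσ : σ ∈ Set.Ico (0:ℝ) 1)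
    (ybar : ℝ) (hfix : F a b σ ybar = ybar) (y : ℝ) (hy : F a b σ y = y) :
    y = ybar := by
  rcases lt_trichotomy y ybar with h | h | h
  · exfalso
    have h1 := g_anti ha h
    unfold F at hfix hy
    nlinarith [hσ.1, mul_le_mul_of_nonneg_left (le_of_lt h) hσ.1]
  · exact h
  · exfalso
    have h1 := g_anti ha h
    unfold F at hfix hy
    nlinarith [hσ.1, mul_le_mul_of_nonneg_left (le_of_lt h) hσ.1]

lemma F_lt_self (a b σ : ℝ) (ha : 0 < a) (hσ : σ ∈ Set.Ico (0:ℝ) 1)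
    (ybar : ℝ) (hfix : F a b σ ybar = ybar) {y : ℝ} (hy : ybar < y) :
    F a b σ y < y := by
  have h1 := g_anti ha hy
  unfold F at hfix ⊢
  nlinarith [hσ.1, mul_le_mul_of_nonneg_left (le_of_lt hy) hσ.1]

lemma F_gt_self (a b σ : ℝ) (ha : 0 < a) (hσ : σ ∈ Set.Ico (0:ℝ) 1)
    (ybar : ℝ) (hfix : F a b σ ybar = ybar) {y : ℝ} (hy : y < ybar) :
    y < F a b σ y := by
  have h1 := g_anti ha hy
  unfold F at hfix ⊢
  nlinarith [hσ.1, mul_le_mul_of_nonneg_left (le_of_lt hy) hσ.1]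

/-- If the orbit stays strictly above `ybar`, it converges to `ybar`. -/
lemma tendsto_of_forall_gt (a b σ : ℝ) (ha : 0 < a) (hσ : σ ∈ Set.Ico (0:ℝ) 1)
    (ybar : ℝ) (hfix : F a b σ ybar = ybar) (x : ℝ)
    (hall : ∀ n, ybar < (F a b σ)^[n] x) :
    Filter.Tendsto (fun n => (F a b σ)^[n] x) Filter.atTop (nhds ybar) := by
  set f := F a b σ with hf
  set s : ℕ → ℝ := fun n => f^[n] x with hs
  have hanti : Antitone s := by
    apply antitone_nat_of_succ_le
    intro n
    have : s (n + 1) = f (s n) := Function.iterate_succ_apply' f n x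
    rw [this]
    exact le_of_lt (F_lt_self a b σ ha hσ ybar hfix (hall n))
  have hbdd : BddBelow (Set.range s) := ⟨ybar, by rintro _ ⟨n, rfl⟩; exact le_of_lt (hall n)⟩
  have hlim : Filter.Tendsto s Filter.atTop (nhds (⨅ n, s n)) :=
    tendsto_atTop_ciInf hanti hbdd
  set c := ⨅ n, s n with hc
  have hfc : f c = c := by
    have h1 : Filter.Tendsto (fun n => s (n + 1)) Filter.atTop (nhds c) :=
      hlim.comp (tendsto_add_atTop_nat 1)
    have h2 : Filter.Tendsto (fun n => f (s n)) Filter.atTop (nhds (f c)) :=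
      ((F_cont a b σ).tendsto c).comp hlim
    have he : (fun n => s (n + 1)) = fun n => f (s n) := by
      funext n; exact Function.iterate_succ_apply' f n x
    rw [he] at h1
    exact tendsto_nhds_unique h2 h1
  have : c = ybar := F_unique_fix a b σ ha hσ ybar hfix c hfc
  rwa [this] at hlim

/-- If the orbit stays strictly below `ybar`, it converges to `ybar`. -/
lemma tendsto_of_forall_lt (a b σ : ℝ) (ha : 0 < a) (hσ : σ ∈ Set.Ico (0:ℝ) 1)
    (ybar : ℝ) (hfix : F a b σ ybar = ybar) (x : ℝ)
    (hall : ∀ n, (F a b σ)^[n] x < ybar) :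
    Filter.Tendsto (fun n => (F a b σ)^[n] x) Filter.atTop (nhds ybar) := by
  set f := F a b σ with hf
  set s : ℕ → ℝ := fun n => f^[n] x with hs
  have hmono : Monotone s := by
    apply monotone_nat_of_le_succ
    intro n
    have : s (n + 1) = f (s n) := Function.iterate_succ_apply' f n x
    rw [this]
    exact le_of_lt (F_gt_self a b σ ha hσ ybar hfix (hall n))
  have hbdd : BddAbove (Set.range s) := ⟨ybar, by rintro _ ⟨n, rfl⟩; exact le_of_lt (hall n)⟩
  have hlim : Filter.Tendsto s Filter.atTop (nhds (⨆ n, s n)) :=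
    tendsto_atTop_ciSup hmono hbdd
  set c := ⨆ n, s n with hc
  have hfc : f c = c := by
    have h1 : Filter.Tendsto (fun n => s (n + 1)) Filter.atTop (nhds c) :=
      hlim.comp (tendsto_add_atTop_nat 1)
    have h2 : Filter.Tendsto (fun n => f (s n)) Filter.atTop (nhds (f c)) :=
      ((F_cont a b σ).tendsto c).comp hlim
    have he : (fun n => s (n + 1)) = fun n => f (s n) := by
      funext n; exact Function.iterate_succ_apply' f n x
    rw [he] at h1
    exact tendsto_nhds_unique h2 h1
  have : c = ybar := F_unique_fix a b σ ha hσ ybar hfix c hfc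
  rwa [this] at hlim

lemma tendsto_shift (f : ℝ → ℝ) (x : ℝ) (k : ℕ) (ybar : ℝ)
    (h : Filter.Tendsto (fun n => f^[n] (f^[k] x)) Filter.atTop (nhds ybar)) :
    Filter.Tendsto (fun n => f^[n] x) Filter.atTop (nhds ybar) := by
  rw [← tendsto_add_atTop_iff_nat k]
  have he : (fun n => f^[n + k] x) = fun n => f^[n] (f^[k] x) := by
    funext n; exact Function.iterate_add_apply f n k x
  rw [he]; exact h

/-- If all points on one side of the unique fixed point `ȳ` of `F` are attracted to
`ȳ`, then all points of `ℝ` are attracted to `ȳ`. -/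
theorem one_sided_attraction (a b σ : ℝ) (ha : 0 < a) (hb : b ∈ Set.Ioo (0:ℝ) 1)
    (hσ : σ ∈ Set.Ico (0:ℝ) 1) (ybar : ℝ) (hfix : F a b σ ybar = ybar) :
    ((∀ x : ℝ, x < ybar →
        Filter.Tendsto (fun n => (F a b σ)^[n] x) Filter.atTop (nhds ybar)) →
      ∀ x : ℝ, Filter.Tendsto (fun n => (F a b σ)^[n] x) Filter.atTop (nhds ybar)) ∧
    ((∀ x : ℝ, ybar < x →
        Filter.Tendsto (fun n => (F a b σ)^[n] x) Filter.atTop (nhds ybar)) →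
      ∀ x : ℝ, Filter.Tendsto (fun n => (F a b σ)^[n] x) Filter.atTop (nhds ybar)) := by
  have hconst : Filter.Tendsto (fun n => (F a b σ)^[n] ybar) Filter.atTop (nhds ybar) := by
    have : (fun n => (F a b σ)^[n] ybar) = fun _ => ybar := by
      funext n; exact Function.iterate_fixed hfix n
    rw [this]; exact tendsto_const_nhds
  constructor
  · intro hyp x
    by_cases hall : ∀ n, ybar < (F a b σ)^[n] x
    · exact tendsto_of_forall_gt a b σ ha hσ ybar hfix x hall
    · push_neg at hall
      obtain ⟨k, hk⟩ := hall
      apply tendsto_shift (F a b σ) x k ybar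
      rcases lt_or_eq_of_le hk with h | h
      · exact hyp _ h
      · rw [h]; exact hconst
  · intro hyp x
    by_cases hall : ∀ n, (F a b σ)^[n] x < ybar
    · exact tendsto_of_forall_lt a b σ ha hσ ybar hfix x hall
    · push_neg at hall
      obtain ⟨k, hk⟩ := hall
      apply tendsto_shift (F a b σ) x k ybar
      rcases lt_or_eq_of_le hk with h | h
      · exact hyp _ h
      · rw [← h]; exact hconst
end

section
/- Let b ∈ (0,1) and σ ∈ [0,1] be fixed, and for each a > 0 let x̄(a) denote the unique fixed point of f_{a,b,σ} in (0,1). There exists a threshold a₀ > 0 such that for all a with 0 < a < a₀ the fixed point x̄(a) is attracting, and for all a > a₀ the fixed point x̄(a) is repelling. -/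
open Real Filter Set

/-- A fixed point `x` of `g` is attracting if some open neighborhood of `x` is
attracted to `x` under iteration of `g`. -/
def IsAttractingFixedPt (g : ℝ → ℝ) (x : ℝ) : Prop :=
  g x = x ∧ ∃ U : Set ℝ, IsOpen U ∧ x ∈ U ∧
    ∀ y ∈ U, Filter.Tendsto (fun n => g^[n] y) Filter.atTop (nhds x)

/-- A fixed point `x` of `g` is repelling if there is an open neighborhood `U` of `x`
such that every `y ∈ U`, `y ≠ x`, eventually leaves `U`. -/
def IsRepellingFixedPt (g : ℝ → ℝ) (x : ℝ) : Prop :=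
  g x = x ∧ ∃ U : Set ℝ, IsOpen U ∧ x ∈ U ∧
    ∀ y ∈ U, y ≠ x → ∃ n : ℕ, g^[n] y ∉ U

noncomputable def Df (a b σ x : ℝ) : ℝ :=
  ((1-σ) * x^(1-σ-1) * (x^(1-σ) + (1-x)^(1-σ) * Real.exp (a*(x-b))) -
    x^(1-σ) * ((1-σ) * x^(1-σ-1) +
      (-1*(1-σ)*(1-x)^(1-σ-1) * Real.exp (a*(x-b)) +
       (1-x)^(1-σ) * (Real.exp (a*(x-b)) * (a*1))))) /
    (x^(1-σ) + (1-x)^(1-σ) * Real.exp (a*(x-b)))^2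

lemma den_pos (a b σ : ℝ) {x : ℝ} (hx : x ∈ Set.Ioo (0:ℝ) 1) :
    0 < x^(1-σ) + (1-x)^(1-σ) * Real.exp (a*(x-b)) := by
  have h1 : (0:ℝ) < x := hx.1
  have h2 : (0:ℝ) < 1 - x := by linarith [hx.2]
  positivity

lemma f_hasDerivAt (a b σ : ℝ) {x : ℝ} (hx : x ∈ Set.Ioo (0:ℝ) 1) :
    HasDerivAt (f a b σ) (Df a b σ x) x := by
  have h1 : (0:ℝ) < x := hx.1
  have h2 : (0:ℝ) < 1 - x := by linarith [hx.2]
  have hu : HasDerivAt (fun y : ℝ => y ^ (1-σ)) ((1-σ) * x^(1-σ-1)) x :=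
    Real.hasDerivAt_rpow_const (Or.inl h1.ne')
  have hw : HasDerivAt (fun y : ℝ => (1-y) ^ (1-σ)) (-1*(1-σ)*(1-x)^(1-σ-1)) x :=
    ((hasDerivAt_id x).const_sub 1).rpow_const (Or.inl h2.ne')
  have hE : HasDerivAt (fun y : ℝ => Real.exp (a*(y-b))) (Real.exp (a*(x-b)) * (a*1)) x :=
    (((hasDerivAt_id x).sub_const b).const_mul a).exp
  have hv := hw.mul hE
  have hden := hu.add hv
  have hne : (x^(1-σ) + (1-x)^(1-σ) * Real.exp (a*(x-b))) ≠ 0 := (den_pos a b σ hx).ne'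
  have := hu.div hden hne
  unfold Df f
  exact this

set_option maxHeartbeats 1000000 in
lemma Df_continuousAt (a b σ : ℝ) {x : ℝ} (hx : x ∈ Set.Ioo (0:ℝ) 1) :
    ContinuousAt (Df a b σ) x := by
  have h1 : (0:ℝ) < x := hx.1
  have h2 : (0:ℝ) < 1 - x := by linarith [hx.2]
  have cu : ContinuousAt (fun y : ℝ => y ^ (1-σ)) x :=
    Real.continuousAt_rpow_const x _ (Or.inl h1.ne')
  have cu' : ContinuousAt (fun y : ℝ => y ^ (1-σ-1)) x :=
    Real.continuousAt_rpow_const x _ (Or.inl h1.ne')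
  have c1x : ContinuousAt (fun y : ℝ => 1 - y) x :=
    (continuous_const.sub continuous_id).continuousAt
  have cw : ContinuousAt (fun y : ℝ => (1-y) ^ (1-σ)) x :=
    ContinuousAt.rpow_const c1x (Or.inl h2.ne')
  have cw' : ContinuousAt (fun y : ℝ => (1-y) ^ (1-σ-1)) x :=
    ContinuousAt.rpow_const c1x (Or.inl h2.ne')
  have cE : ContinuousAt (fun y : ℝ => Real.exp (a*(y-b))) x :=
    (Real.continuous_exp.comp
      (continuous_const.mul (continuous_id.sub continuous_const))).continuousAt
  have cden : ContinuousAt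
      (fun y : ℝ => y^(1-σ) + (1-y)^(1-σ) * Real.exp (a*(y-b))) x :=
    cu.add (cw.mul cE)
  have hne : (x^(1-σ) + (1-x)^(1-σ) * Real.exp (a*(x-b))) ≠ 0 := (den_pos a b σ hx).ne'
  unfold Df
  exact ((((continuousAt_const.mul cu').mul cden).sub
    (cu.mul ((continuousAt_const.mul cu').add
      (((continuousAt_const.mul cw').mul cE).add
        (cw.mul (cE.mul continuousAt_const)))))).div (cden.pow 2) (pow_ne_zero 2 hne))

lemma Df_fixed (a b σ : ℝ) {x : ℝ} (hx : x ∈ Set.Ioo (0:ℝ) 1) (hfx : f a b σ x = x) :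
    Df a b σ x = (1-σ) - a*x*(1-x) := by
  have h1 : (0:ℝ) < x := hx.1
  have h2 : (0:ℝ) < 1 - x := by linarith [hx.2]
  have hu : (0:ℝ) < x^(1-σ) := Real.rpow_pos_of_pos h1 _
  have hw : (0:ℝ) < (1-x)^(1-σ) := Real.rpow_pos_of_pos h2 _
  have hEp : (0:ℝ) < Real.exp (a*(x-b)) := Real.exp_pos _
  have hden := den_pos a b σ hx
  have hrel : x^(1-σ) = x * (x^(1-σ) + (1-x)^(1-σ) * Real.exp (a*(x-b))) := by
    have h := hfx
    rw [f, div_eq_iff hden.ne'] at h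
    linarith [h]
  have e1 : x^(1-σ-1) = x^(1-σ) / x := by
    rw [show (1-σ-1 : ℝ) = (1-σ) - 1 by ring, Real.rpow_sub h1, Real.rpow_one]
  have e2 : (1-x)^(1-σ-1) = (1-x)^(1-σ) / (1-x) := by
    rw [show (1-σ-1 : ℝ) = (1-σ) - 1 by ring, Real.rpow_sub h2, Real.rpow_one]
  have hEeq : Real.exp (a*(x-b)) = x^(1-σ) * (1-x) / (x * (1-x)^(1-σ)) := by
    rw [eq_div_iff (by positivity)]
    nlinarith [hrel]
  rw [Df, e1, e2, hEeq]
  field_simp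
  ring

lemma attracting_of_deriv {g D : ℝ → ℝ} {x₀ : ℝ} (hx : x₀ ∈ Set.Ioo (0:ℝ) 1)
    (hg : ∀ x ∈ Set.Ioo (0:ℝ) 1, HasDerivAt g (D x) x) (hDc : ContinuousAt D x₀)
    (hfix : g x₀ = x₀) (h1 : |D x₀| < 1) : IsAttractingFixedPt g x₀ := by
  set k := (|D x₀| + 1)/2 with hk
  have hk0 : 0 ≤ k := by positivity
  have hk1 : k < 1 := by rw [hk]; linarith
  have hDk : |D x₀| < k := by rw [hk]; linarith
  have hev : ∀ᶠ y in nhds x₀, |D y| < k ∧ y ∈ Set.Ioo (0:ℝ) 1 := by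
    have h1' : ∀ᶠ y in nhds x₀, |D y| < k := by
      have : ContinuousAt (fun y => |D y|) x₀ := hDc.abs
      exact this.eventually_lt continuousAt_const hDk
    have h2' : ∀ᶠ y in nhds x₀, y ∈ Set.Ioo (0:ℝ) 1 :=
      (isOpen_Ioo).eventually_mem hx
    exact h1'.and h2'
  obtain ⟨δ, hδ0, hδ⟩ := Metric.eventually_nhds_iff_ball.mp hev
  rw [Real.ball_eq_Ioo] at hδ
  set U := Set.Ioo (x₀ - δ) (x₀ + δ) with hU
  have hx₀U : x₀ ∈ U := by constructor <;> simp [hU] <;> linarith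
  have hUsub : ∀ y ∈ U, |D y| < k ∧ y ∈ Set.Ioo (0:ℝ) 1 := fun y hy => hδ y hy
  have key : ∀ y ∈ U, |g y - x₀| ≤ k * |y - x₀| := by
    intro y hy
    have := Convex.norm_image_sub_le_of_norm_hasDerivWithin_le
      (f := g) (f' := D) (s := U) (C := k)
      (fun z hz => ((hg z (hUsub z hz).2).hasDerivWithinAt))
      (fun z hz => le_of_lt (hUsub z hz).1) (convex_Ioo _ _) hx₀U hy
    rw [hfix] at this
    simpa [Real.norm_eq_abs] using this
  have step : ∀ y ∈ U, g y ∈ U := by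
    intro y hy
    have h := key y hy
    have hyd : |y - x₀| < δ := by
      rcases hy with ⟨hy1, hy2⟩
      rw [abs_lt]; constructor <;> linarith
    have : |g y - x₀| < δ := lt_of_le_of_lt h (by nlinarith [abs_nonneg (y - x₀)])
    rw [abs_lt] at this
    constructor <;> linarith [this.1, this.2]
  refine ⟨hfix, U, isOpen_Ioo, hx₀U, ?_⟩
  intro y hy
  have ind : ∀ n : ℕ, g^[n] y ∈ U ∧ |g^[n] y - x₀| ≤ k^n * |y - x₀| := by
    intro n
    induction n with
    | zero => simpa using hy
    | succ n ih =>
      rw [Function.iterate_succ_apply']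
      refine ⟨step _ ih.1, ?_⟩
      calc |g (g^[n] y) - x₀| ≤ k * |g^[n] y - x₀| := key _ ih.1
        _ ≤ k * (k^n * |y - x₀|) := by nlinarith [ih.2, abs_nonneg (g^[n] y - x₀)]
        _ = k^(n+1) * |y - x₀| := by ring
  rw [tendsto_iff_dist_tendsto_zero]
  have hlim : Filter.Tendsto (fun n : ℕ => k^n * |y - x₀|) Filter.atTop (nhds 0) := by
    have := tendsto_pow_atTop_nhds_zero_of_lt_one hk0 hk1
    simpa using this.mul_const |y - x₀|
  refine squeeze_zero (fun n => dist_nonneg) (fun n => ?_) hlim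
  rw [Real.dist_eq]
  exact (ind n).2

lemma repelling_of_deriv {g D : ℝ → ℝ} {x₀ : ℝ} (hx : x₀ ∈ Set.Ioo (0:ℝ) 1)
    (hg : ∀ x ∈ Set.Ioo (0:ℝ) 1, HasDerivAt g (D x) x) (hDc : ContinuousAt D x₀)
    (hfix : g x₀ = x₀) (h1 : 1 < |D x₀|) : IsRepellingFixedPt g x₀ := by
  set K := (|D x₀| + 1)/2 with hK
  have hK1 : 1 < K := by rw [hK]; linarith
  have hDK : K < |D x₀| := by rw [hK]; linarith
  have hev : ∀ᶠ y in nhds x₀, K < |D y| ∧ y ∈ Set.Ioo (0:ℝ) 1 := by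
    have h1' : ∀ᶠ y in nhds x₀, K < |D y| :=
      (continuousAt_const.eventually_lt hDc.abs hDK)
    exact h1'.and ((isOpen_Ioo).eventually_mem hx)
  obtain ⟨δ, hδ0, hδ⟩ := Metric.eventually_nhds_iff_ball.mp hev
  rw [Real.ball_eq_Ioo] at hδ
  set U := Set.Ioo (x₀ - δ) (x₀ + δ) with hU
  have hx₀U : x₀ ∈ U := by constructor <;> simp [hU] <;> linarith
  have hUsub : ∀ y ∈ U, K < |D y| ∧ y ∈ Set.Ioo (0:ℝ) 1 := fun y hy => hδ y hy
  have hcont : ∀ z ∈ U, ContinuousAt g z := fun z hz =>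
    (hg z (hUsub z hz).2).continuousAt
  have grow : ∀ z ∈ U, K * |z - x₀| ≤ |g z - x₀| := by
    intro z hz
    rcases eq_or_ne z x₀ with rfl | hne
    · simp
    rcases lt_or_gt_of_ne hne with hlt | hgt
    · -- z < x₀
      have hsub : Set.Icc z x₀ ⊆ U := by
        intro t ht
        exact ⟨lt_of_lt_of_le hz.1 ht.1, lt_of_le_of_lt ht.2 hx₀U.2⟩
      obtain ⟨c, hc, hc'⟩ := exists_hasDerivAt_eq_slope g D hlt
        (fun t ht => (hcont t (hsub ht)).continuousWithinAt)
        (fun t ht => hg t (hUsub t (hsub (Set.mem_Icc_of_Ioo ht))).2)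
      have hcU : c ∈ U := hsub (Set.mem_Icc_of_Ioo hc)
      have hne0 : x₀ - z ≠ 0 := sub_ne_zero.mpr hlt.ne'
      have h2 : D c * (x₀ - z) = g x₀ - g z := by
        rw [hc']; field_simp
      have h3 : |D c| * |z - x₀| = |g z - x₀| := by
        rw [abs_sub_comm z x₀, abs_sub_comm (g z) x₀, ← abs_mul, h2, hfix]
      nlinarith [(hUsub c hcU).1, abs_nonneg (z - x₀), abs_pos.mpr (sub_ne_zero.mpr hne)]
    · -- x₀ < z
      have hsub : Set.Icc x₀ z ⊆ U := by
        intro t ht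
        exact ⟨lt_of_lt_of_le hx₀U.1 ht.1, lt_of_le_of_lt ht.2 hz.2⟩
      obtain ⟨c, hc, hc'⟩ := exists_hasDerivAt_eq_slope g D hgt
        (fun t ht => (hcont t (hsub ht)).continuousWithinAt)
        (fun t ht => hg t (hUsub t (hsub (Set.mem_Icc_of_Ioo ht))).2)
      have hcU : c ∈ U := hsub (Set.mem_Icc_of_Ioo hc)
      have hne0 : z - x₀ ≠ 0 := sub_ne_zero.mpr hne
      have h2 : D c * (z - x₀) = g z - g x₀ := by
        rw [hc']; field_simp
      have h3 : |D c| * |z - x₀| = |g z - x₀| := by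
        rw [← abs_mul, h2, hfix]
      nlinarith [(hUsub c hcU).1, abs_nonneg (z - x₀), abs_pos.mpr (sub_ne_zero.mpr hne)]
  refine ⟨hfix, U, isOpen_Ioo, hx₀U, ?_⟩
  intro y hy hne
  by_contra hcon
  push_neg at hcon
  have ind : ∀ n : ℕ, K^n * |y - x₀| ≤ |g^[n] y - x₀| := by
    intro n
    induction n with
    | zero => simp
    | succ n ih =>
      rw [Function.iterate_succ_apply']
      calc K^(n+1) * |y - x₀| = K * (K^n * |y - x₀|) := by ring
        _ ≤ K * |g^[n] y - x₀| := by nlinarith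
        _ ≤ |g (g^[n] y) - x₀| := grow _ (hcon n)
  have hy0 : 0 < |y - x₀| := abs_pos.mpr (sub_ne_zero.mpr hne)
  obtain ⟨n, hn⟩ := pow_unbounded_of_one_lt (δ / |y - x₀|) hK1
  have hlt : δ < K^n * |y - x₀| := by
    rw [div_lt_iff₀ hy0] at hn
    linarith
  have hbound : |g^[n] y - x₀| < δ := by
    rcases hcon n with ⟨ha, hb⟩
    rw [abs_lt]; constructor <;> linarith
  linarith [ind n]

lemma fixed_rel (a b σ : ℝ) {x : ℝ} (hx : x ∈ Set.Ioo (0:ℝ) 1) (hfx : f a b σ x = x) :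
    σ * (Real.log (1-x) - Real.log x) = a * (x - b) := by
  have h1 : (0:ℝ) < x := hx.1
  have h2 : (0:ℝ) < 1 - x := by linarith [hx.2]
  have hu : (0:ℝ) < x^(1-σ) := Real.rpow_pos_of_pos h1 _
  have hw : (0:ℝ) < (1-x)^(1-σ) := Real.rpow_pos_of_pos h2 _
  have hEp : (0:ℝ) < Real.exp (a*(x-b)) := Real.exp_pos _
  have hden := den_pos a b σ hx
  have hrel : x^(1-σ) * (1-x) = x * ((1-x)^(1-σ) * Real.exp (a*(x-b))) := by
    have h := hfx
    rw [f, div_eq_iff hden.ne'] at h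
    nlinarith [h]
  have hlog := congrArg Real.log hrel
  rw [Real.log_mul hu.ne' h2.ne', Real.log_mul h1.ne' (by positivity),
      Real.log_mul hw.ne' hEp.ne', Real.log_rpow h1, Real.log_rpow h2,
      Real.log_exp] at hlog
  linarith [hlog]

lemma G0_hasDerivAt {b x : ℝ} (hx : x ∈ Set.Ioo (0:ℝ) 1) (hxb : x ≠ b) :
    HasDerivAt (fun y => y*(1-y)*(Real.log (1-y) - Real.log y)/(y-b))
      ((((1*(1-x) + x*(-1))*(Real.log (1-x) - Real.log x) +
          x*(1-x)*(-1/(1-x) - x⁻¹)) * (x-b) -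
        x*(1-x)*(Real.log (1-x) - Real.log x) * 1)/(x-b)^2) x := by
  have h1 : (0:ℝ) < x := hx.1
  have h2 : (0:ℝ) < 1 - x := by linarith [hx.2]
  have hq : HasDerivAt (fun y : ℝ => y*(1-y)) (1*(1-x) + x*(-1)) x :=
    (hasDerivAt_id x).mul ((hasDerivAt_id x).const_sub 1)
  have hlog1 : HasDerivAt (fun y : ℝ => Real.log (1-y)) (-1/(1-x)) x :=
    ((hasDerivAt_id x).const_sub 1).log h2.ne'
  have hlog2 : HasDerivAt Real.log x⁻¹ x := Real.hasDerivAt_log h1.ne'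
  have hM := hlog1.sub hlog2
  have hh := hq.mul hM
  have hden : HasDerivAt (fun y : ℝ => y - b) 1 x := (hasDerivAt_id x).sub_const b
  exact hh.div hden (sub_ne_zero.mpr hxb)

lemma G0_strictAntiOn {b : ℝ} (hb0 : 0 < b) (hb2 : b < 1/2) :
    StrictAntiOn (fun x => x*(1-x)*(Real.log (1-x) - Real.log x)/(x-b))
      (Set.Ioo b (1/2)) := by
  apply strictAntiOn_of_deriv_neg (convex_Ioo _ _)
  · intro x hx
    have hx' : x ∈ Set.Ioo (0:ℝ) 1 := ⟨lt_trans hb0 hx.1, by linarith [hx.2]⟩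
    exact (G0_hasDerivAt hx' (ne_of_gt hx.1)).continuousAt.continuousWithinAt
  · intro x hx
    rw [interior_Ioo] at hx
    have hx' : x ∈ Set.Ioo (0:ℝ) 1 := ⟨lt_trans hb0 hx.1, by linarith [hx.2]⟩
    have h1 : (0:ℝ) < x := hx'.1
    have h2 : (0:ℝ) < 1 - x := by linarith [hx'.2]
    have hd := G0_hasDerivAt hx' (ne_of_gt hx.1)
    rw [hd.deriv]
    have hM : 0 < Real.log (1-x) - Real.log x :=
      sub_pos.mpr (Real.log_lt_log h1 (by linarith [hx.2]))
    have e : x*(1-x)*(-1/(1-x) - x⁻¹) = -1 := by field_simp; ring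
    rw [e]
    apply div_neg_of_neg_of_pos
    · have hxb : 0 < x - b := sub_pos.mpr hx.1
      have inner : 0 < x*(1-x) - (1-2*x)*(x-b) := by nlinarith [sq_nonneg (x-b), hb0]
      nlinarith [mul_pos hM inner, hxb]
    · have hxb : 0 < x - b := sub_pos.mpr hx.1
      positivity

lemma G0_strictMonoOn {b : ℝ} (hb2 : 1/2 < b) (hb1 : b < 1) :
    StrictMonoOn (fun x => x*(1-x)*(Real.log (1-x) - Real.log x)/(x-b))
      (Set.Ioo (1/2) b) := by
  apply strictMonoOn_of_deriv_pos (convex_Ioo _ _)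
  · intro x hx
    have hx' : x ∈ Set.Ioo (0:ℝ) 1 := ⟨by linarith [hx.1], lt_trans hx.2 hb1⟩
    exact (G0_hasDerivAt hx' (ne_of_lt hx.2)).continuousAt.continuousWithinAt
  · intro x hx
    rw [interior_Ioo] at hx
    have hx' : x ∈ Set.Ioo (0:ℝ) 1 := ⟨by linarith [hx.1], lt_trans hx.2 hb1⟩
    have h1 : (0:ℝ) < x := hx'.1
    have h2 : (0:ℝ) < 1 - x := by linarith [hx'.2]
    have hd := G0_hasDerivAt hx' (ne_of_lt hx.2)
    rw [hd.deriv]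
    have hM : Real.log (1-x) - Real.log x < 0 :=
      sub_neg.mpr (Real.log_lt_log h2 (by linarith [hx.1]))
    have e : x*(1-x)*(-1/(1-x) - x⁻¹) = -1 := by field_simp; ring
    rw [e]
    apply div_pos
    · have hxb : 0 < b - x := sub_pos.mpr hx.2
      have inner : 0 < x*(1-x) - (1-2*x)*(x-b) := by
        nlinarith [sq_nonneg (x-b), mul_pos (lt_trans (by norm_num : (0:ℝ)<1/2) hb2) (sub_pos.mpr hb1)]
      nlinarith [mul_pos (neg_pos.mpr hM) inner, hxb]
    · have hxb : x - b ≠ 0 := sub_ne_zero.mpr (ne_of_lt hx.2)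
      positivity

lemma loc_sq (b σ a : ℝ) (hσ0 : 0 ≤ σ) (ha : 0 < a) {x : ℝ} (hx : x ∈ Set.Ioo (0:ℝ) 1)
    (hrel : σ * (Real.log (1-x) - Real.log x) = a * (x - b)) :
    (x - 1/2)^2 ≤ (b - 1/2)^2 := by
  have h1 : (0:ℝ) < x := hx.1
  have h2 : (0:ℝ) < 1 - x := by linarith [hx.2]
  have hprod : (x - b) * (x - 1/2) ≤ 0 := by
    rcases lt_trichotomy x (1/2) with hlt | heq | hgt
    · have hM : 0 < Real.log (1-x) - Real.log x :=
        sub_pos.mpr (Real.log_lt_log h1 (by linarith))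
      have hge : 0 ≤ x - b := by
        by_contra hc
        push_neg at hc
        have := mul_neg_of_pos_of_neg ha (by linarith : x - b < 0)
        nlinarith [mul_nonneg hσ0 hM.le]
      nlinarith
    · rw [heq]; simp
    · have hM : Real.log (1-x) - Real.log x < 0 :=
        sub_neg.mpr (Real.log_lt_log h2 (by linarith))
      have hle : x - b ≤ 0 := by
        by_contra hc
        push_neg at hc
        have := mul_pos ha hc
        nlinarith [mul_nonpos_of_nonneg_of_nonpos hσ0 hM.le]
      nlinarith
  nlinarith [sq_nonneg (b - x), hprod]

lemma phi_mono (b σ : ℝ) (hb0 : 0 < b) (hb1 : b < 1) (hσ0 : 0 ≤ σ) (hσ1 : σ ≤ 1)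
    (xbar : ℝ → ℝ) (hIoo : ∀ a, 0 < a → xbar a ∈ Set.Ioo (0:ℝ) 1)
    (hrel : ∀ a, 0 < a → σ * (Real.log (1-xbar a) - Real.log (xbar a)) = a * (xbar a - b)) :
    ∀ a₁ a₂ : ℝ, 0 < a₁ → a₁ < a₂ →
      a₁ * (xbar a₁ * (1 - xbar a₁)) < a₂ * (xbar a₂ * (1 - xbar a₂)) := by
  intro a₁ a₂ ha₁ h12
  have ha₂ : 0 < a₂ := lt_trans ha₁ h12
  rcases eq_or_lt_of_le hσ0 with hσz | hσp
  · -- σ = 0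
    have hx : ∀ a, 0 < a → xbar a = b := by
      intro a ha
      have h := hrel a ha
      rw [← hσz, zero_mul] at h
      have : xbar a - b = 0 := by
        rcases mul_eq_zero.mp h.symm with h' | h'
        · exact absurd h' ha.ne'
        · exact h'
      linarith
    rw [hx a₁ ha₁, hx a₂ ha₂]
    have hbb : 0 < b * (1 - b) := by nlinarith
    exact mul_lt_mul_of_pos_right h12 hbb
  · rcases lt_trichotomy b (1/2) with hblt | hbeq | hbgt
    · -- b < 1/2 : xbar ∈ Ioo b (1/2), antitone
      have loc : ∀ a, 0 < a → xbar a ∈ Set.Ioo b (1/2) := by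
        intro a ha
        obtain ⟨hx1, hx2⟩ := hIoo a ha
        have h := hrel a ha
        constructor
        · by_contra hc
          push_neg at hc
          have hM : 0 < Real.log (1-xbar a) - Real.log (xbar a) :=
            sub_pos.mpr (Real.log_lt_log hx1 (by linarith))
          nlinarith [mul_pos hσp hM, mul_nonpos_of_nonneg_of_nonpos ha.le
            (by linarith : xbar a - b ≤ 0)]
        · by_contra hc
          push_neg at hc
          have hM : Real.log (1-xbar a) - Real.log (xbar a) ≤ 0 := by
            have : Real.log (1-xbar a) ≤ Real.log (xbar a) :=
              Real.log_le_log (by linarith) (by linarith)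
            linarith
          nlinarith [mul_nonpos_of_nonneg_of_nonpos hσp.le hM,
            mul_pos ha (by linarith : (0:ℝ) < xbar a - b)]
      have l1 := loc a₁ ha₁
      have l2 := loc a₂ ha₂
      have hanti : xbar a₂ < xbar a₁ := by
        by_contra hc
        push_neg at hc
        rcases eq_or_lt_of_le hc with heq | hlt
        · have h1 := hrel a₁ ha₁
          have h2 := hrel a₂ ha₂
          rw [heq] at h1
          rw [h1] at h2
          have : a₁ = a₂ := mul_right_cancel₀ (sub_ne_zero.mpr (ne_of_gt l2.1)) h2
          linarith
        · -- xbar a₁ < xbar a₂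
          have hM : Real.log (1-xbar a₂) - Real.log (xbar a₂) <
              Real.log (1-xbar a₁) - Real.log (xbar a₁) := by
            have e1 : Real.log (1-xbar a₂) < Real.log (1-xbar a₁) :=
              Real.log_lt_log (by linarith [l2.2]) (by linarith)
            have e2 : Real.log (xbar a₁) < Real.log (xbar a₂) :=
              Real.log_lt_log (by linarith [hb0, l1.1]) hlt
            linarith
          have h1 := hrel a₁ ha₁
          have h2 := hrel a₂ ha₂
          have c1 : a₂ * (xbar a₂ - b) < a₁ * (xbar a₁ - b) := by
            rw [← h1, ← h2]
            exact mul_lt_mul_of_pos_left hM hσp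
          have c2 : a₁ * (xbar a₁ - b) < a₂ * (xbar a₁ - b) :=
            mul_lt_mul_of_pos_right h12 (sub_pos.mpr l1.1)
          have c3 : a₂ * (xbar a₁ - b) ≤ a₂ * (xbar a₂ - b) :=
            mul_le_mul_of_nonneg_left (by linarith) ha₂.le
          linarith
      have key : ∀ a, 0 < a → a * (xbar a * (1 - xbar a)) =
          σ * (xbar a*(1-xbar a)*(Real.log (1-xbar a) - Real.log (xbar a))/(xbar a - b)) := by
        intro a ha
        have hne : xbar a - b ≠ 0 := sub_ne_zero.mpr (ne_of_gt (loc a ha).1)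
        rw [← mul_div_assoc, eq_div_iff hne]
        linear_combination (-(xbar a * (1 - xbar a))) * (hrel a ha)
      rw [key a₁ ha₁, key a₂ ha₂]
      exact mul_lt_mul_of_pos_left (G0_strictAntiOn hb0 hblt l2 l1 hanti) hσp
    · -- b = 1/2 : xbar = 1/2
      have hx : ∀ a, 0 < a → xbar a = 1/2 := by
        intro a ha
        obtain ⟨hx1, hx2⟩ := hIoo a ha
        have h := hrel a ha
        by_contra hc
        rcases lt_or_gt_of_ne hc with hlt | hgt
        · have hM : 0 < Real.log (1-xbar a) - Real.log (xbar a) :=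
            sub_pos.mpr (Real.log_lt_log hx1 (by linarith [hbeq]))
          nlinarith [mul_pos hσp hM,
            mul_neg_of_pos_of_neg ha (by linarith [hbeq] : xbar a - b < 0)]
        · have hM : Real.log (1-xbar a) - Real.log (xbar a) < 0 :=
            sub_neg.mpr (Real.log_lt_log (by linarith [hbeq]) (by linarith [hbeq]))
          nlinarith [mul_neg_of_pos_of_neg hσp hM,
            mul_pos ha (by linarith [hbeq] : (0:ℝ) < xbar a - b)]
      rw [hx a₁ ha₁, hx a₂ ha₂]
      nlinarith
    · -- b > 1/2 : xbar ∈ Ioo (1/2) b, monotone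
      have loc : ∀ a, 0 < a → xbar a ∈ Set.Ioo (1/2 : ℝ) b := by
        intro a ha
        obtain ⟨hx1, hx2⟩ := hIoo a ha
        have h := hrel a ha
        constructor
        · by_contra hc
          push_neg at hc
          have hM : 0 ≤ Real.log (1-xbar a) - Real.log (xbar a) := by
            have : Real.log (xbar a) ≤ Real.log (1-xbar a) :=
              Real.log_le_log hx1 (by linarith)
            linarith
          nlinarith [mul_nonneg hσp.le hM,
            mul_neg_of_pos_of_neg ha (by linarith : xbar a - b < 0)]
        · by_contra hc
          push_neg at hc
          have hM : Real.log (1-xbar a) - Real.log (xbar a) < 0 :=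
            sub_neg.mpr (Real.log_lt_log (by linarith) (by linarith [hbgt]))
          nlinarith [mul_neg_of_pos_of_neg hσp hM,
            mul_nonneg ha.le (by linarith : (0:ℝ) ≤ xbar a - b)]
      have l1 := loc a₁ ha₁
      have l2 := loc a₂ ha₂
      have hmono : xbar a₁ < xbar a₂ := by
        by_contra hc
        push_neg at hc
        rcases eq_or_lt_of_le hc with heq | hlt
        · have h1 := hrel a₁ ha₁
          have h2 := hrel a₂ ha₂
          rw [heq] at h2
          rw [h1] at h2
          have : a₁ = a₂ := mul_right_cancel₀ (sub_ne_zero.mpr (ne_of_lt l1.2)) h2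
          linarith
        · -- xbar a₂ < xbar a₁
          have hM : Real.log (1-xbar a₁) - Real.log (xbar a₁) <
              Real.log (1-xbar a₂) - Real.log (xbar a₂) := by
            have e1 : Real.log (1-xbar a₁) < Real.log (1-xbar a₂) :=
              Real.log_lt_log (by linarith [l1.2, hb1]) (by linarith)
            have e2 : Real.log (xbar a₂) < Real.log (xbar a₁) :=
              Real.log_lt_log (by linarith [l2.1]) hlt
            linarith
          have h1 := hrel a₁ ha₁
          have h2 := hrel a₂ ha₂
          have c1 : a₁ * (xbar a₁ - b) < a₂ * (xbar a₂ - b) := by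
            rw [← h1, ← h2]
            exact mul_lt_mul_of_pos_left hM hσp
          have c2 : a₂ * (xbar a₂ - b) < a₁ * (xbar a₂ - b) :=
            mul_lt_mul_of_neg_right h12 (sub_neg.mpr l2.2)
          have c3 : a₁ * (xbar a₂ - b) ≤ a₁ * (xbar a₁ - b) :=
            mul_le_mul_of_nonneg_left (by linarith) ha₁.le
          linarith
      have key : ∀ a, 0 < a → a * (xbar a * (1 - xbar a)) =
          σ * (xbar a*(1-xbar a)*(Real.log (1-xbar a) - Real.log (xbar a))/(xbar a - b)) := by
        intro a ha
        have hne : xbar a - b ≠ 0 := sub_ne_zero.mpr (ne_of_lt (loc a ha).2)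
        rw [← mul_div_assoc, eq_div_iff hne]
        linear_combination (-(xbar a * (1 - xbar a))) * (hrel a ha)
      rw [key a₁ ha₁, key a₂ ha₂]
      exact mul_lt_mul_of_pos_left (G0_strictMonoOn hbgt hb1 l1 l2 hmono) hσp

/-- There is a threshold `a₀ > 0` below which the perturbed equilibrium is attracting
and above which it is repelling. -/
theorem stability_threshold (b σ : ℝ) (hb : b ∈ Set.Ioo (0:ℝ) 1)
    (hσ : σ ∈ Set.Icc (0:ℝ) 1) (xbar : ℝ → ℝ)
    (hfix : ∀ a > (0:ℝ), xbar a ∈ Set.Ioo (0:ℝ) 1 ∧ f a b σ (xbar a) = xbar a) :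
    ∃ a₀ > (0:ℝ),
      (∀ a : ℝ, 0 < a → a < a₀ → IsAttractingFixedPt (f a b σ) (xbar a)) ∧
      (∀ a : ℝ, a₀ < a → IsRepellingFixedPt (f a b σ) (xbar a)) := by
  obtain ⟨hb0, hb1⟩ := hb
  obtain ⟨hσ0, hσ1⟩ := hσ
  have hIoo : ∀ a, 0 < a → xbar a ∈ Set.Ioo (0:ℝ) 1 := fun a ha => (hfix a ha).1
  have hfx : ∀ a, 0 < a → f a b σ (xbar a) = xbar a := fun a ha => (hfix a ha).2
  have hrel : ∀ a, 0 < a →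
      σ * (Real.log (1-xbar a) - Real.log (xbar a)) = a * (xbar a - b) :=
    fun a ha => fixed_rel a b σ (hIoo a ha) (hfx a ha)
  have hmono := phi_mono b σ hb0 hb1 hσ0 hσ1 xbar hIoo hrel
  have hub : ∀ a, 0 < a → xbar a * (1 - xbar a) ≤ 1/4 := by
    intro a ha
    nlinarith [sq_nonneg (xbar a - 1/2)]
  have hlb : ∀ a, 0 < a → b*(1-b) ≤ xbar a * (1 - xbar a) := by
    intro a ha
    have := loc_sq b σ a hσ0 ha (hIoo a ha) (hrel a ha)
    nlinarith [this]
  have h2σ : (0:ℝ) < 2 - σ := by linarith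
  set S : Set ℝ := {a : ℝ | 0 < a ∧ a * (xbar a * (1 - xbar a)) ≤ 2 - σ} with hS
  have hmem : (2-σ) ∈ S := by
    refine ⟨h2σ, ?_⟩
    have := mul_le_mul_of_nonneg_left (hub (2-σ) h2σ) h2σ.le
    nlinarith
  have hbddS : BddAbove S := by
    refine ⟨(2-σ)/(b*(1-b)), ?_⟩
    rintro a ⟨ha, hle⟩
    have hbb : (0:ℝ) < b*(1-b) := by nlinarith
    rw [le_div_iff₀ hbb]
    have := mul_le_mul_of_nonneg_left (hlb a ha) ha.le
    nlinarith
  set a₀ := sSup S with ha₀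
  have ha₀pos : 0 < a₀ := lt_of_lt_of_le h2σ (le_csSup hbddS hmem)
  refine ⟨a₀, ha₀pos, ?_, ?_⟩
  · intro a ha haa₀
    obtain ⟨a', ha'S, haa'⟩ := exists_lt_of_lt_csSup ⟨_, hmem⟩ haa₀
    have hφ : a * (xbar a * (1-xbar a)) < 2 - σ :=
      lt_of_lt_of_le (hmono a a' ha haa') ha'S.2
    have hxa := hIoo a ha
    have hD := Df_fixed a b σ hxa (hfx a ha)
    have habs : |Df a b σ (xbar a)| < 1 := by
      rw [hD, abs_lt]
      have hpos : 0 < xbar a * (1 - xbar a) := by nlinarith [hxa.1, hxa.2]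
      constructor
      · nlinarith
      · nlinarith [mul_pos ha hpos]
    exact attracting_of_deriv hxa (fun x hx => f_hasDerivAt a b σ hx)
      (Df_continuousAt a b σ hxa) (hfx a ha) habs
  · intro a haa₀
    have ha : 0 < a := lt_trans ha₀pos haa₀
    have hnS : a ∉ S := fun hIn => absurd (le_csSup hbddS hIn) (not_le.mpr haa₀)
    have hφ : 2 - σ < a * (xbar a * (1-xbar a)) := by
      by_contra hc
      push_neg at hc
      exact hnS ⟨ha, hc⟩
    have hxa := hIoo a ha
    have hD := Df_fixed a b σ hxa (hfx a ha)
    have habs : 1 < |Df a b σ (xbar a)| := by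
      rw [hD]
      have hlt : (1-σ) - a*(xbar a)*(1-xbar a) < -1 := by nlinarith
      rw [lt_abs]
      right
      linarith
    exact repelling_of_deriv hxa (fun x hx => f_hasDerivAt a b σ hx)
      (Df_continuousAt a b σ hxa) (hfx a ha) habs
end

section
/- Let a > 0, b ∈ (0,1) and 0 ≤ σ₁ < σ₂ ≤ 1. Then for every x ∈ (0,1): f_{a,b,σ₁}(x) < f_{a,b,σ₂}(x) if and only if x < 1/2, and f_{a,b,σ₁}(x) > f_{a,b,σ₂}(x) if and only if x > 1/2. -/
open Real Filter Set

/-- Pointwise comparison of the maps for two discount factors `σ₁ < σ₂`. -/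
theorem pointwise_comparison (a b σ₁ σ₂ : ℝ) (ha : 0 < a) (hb : b ∈ Set.Ioo (0:ℝ) 1)
    (h1 : 0 ≤ σ₁) (h12 : σ₁ < σ₂) (h2 : σ₂ ≤ 1) :
    ∀ x ∈ Set.Ioo (0:ℝ) 1,
      (f a b σ₁ x < f a b σ₂ x ↔ x < 1/2) ∧
      (f a b σ₂ x < f a b σ₁ x ↔ 1/2 < x) := by
  rintro x ⟨hx0, hx1⟩
  have hy0 : (0:ℝ) < 1 - x := by linarith
  set E := Real.exp (a * (x - b)) with hE
  have hEpos : 0 < E := Real.exp_pos _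
  set q : ℝ := σ₂ - σ₁ with hq
  have hqpos : 0 < q := by simp [hq]; linarith
  have hA : 0 < x ^ (1 - σ₁) := Real.rpow_pos_of_pos hx0 _
  have hB : 0 < x ^ (1 - σ₂) := Real.rpow_pos_of_pos hx0 _
  have hC : 0 < (1 - x) ^ (1 - σ₁) := Real.rpow_pos_of_pos hy0 _
  have hD : 0 < (1 - x) ^ (1 - σ₂) := Real.rpow_pos_of_pos hy0 _
  have hden1 : 0 < x ^ (1 - σ₁) + (1 - x) ^ (1 - σ₁) * E := by positivity
  have hden2 : 0 < x ^ (1 - σ₂) + (1 - x) ^ (1 - σ₂) * E := by positivity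
  have hsplitx : x ^ (1 - σ₁) = x ^ (1 - σ₂) * x ^ q := by
    rw [← Real.rpow_add hx0]; rw [hq]; ring_nf
  have hsplity : (1 - x) ^ (1 - σ₁) = (1 - x) ^ (1 - σ₂) * (1 - x) ^ q := by
    rw [← Real.rpow_add hy0]; rw [hq]; ring_nf
  have key1 : f a b σ₁ x < f a b σ₂ x ↔ x ^ q < (1 - x) ^ q := by
    unfold f
    rw [div_lt_div_iff₀ hden1 hden2, hsplitx, hsplity]
    constructor
    · intro h; nlinarith [mul_pos (mul_pos hB hD) hEpos]
    · intro h; nlinarith [mul_pos (mul_pos hB hD) hEpos]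
  have key2 : f a b σ₂ x < f a b σ₁ x ↔ (1 - x) ^ q < x ^ q := by
    unfold f
    rw [div_lt_div_iff₀ hden2 hden1, hsplitx, hsplity]
    constructor
    · intro h; nlinarith [mul_pos (mul_pos hB hD) hEpos]
    · intro h; nlinarith [mul_pos (mul_pos hB hD) hEpos]
  have hiff1 : x ^ q < (1 - x) ^ q ↔ x < 1 - x :=
    Real.rpow_lt_rpow_iff hx0.le hy0.le hqpos
  have hiff2 : (1 - x) ^ q < x ^ q ↔ 1 - x < x :=
    Real.rpow_lt_rpow_iff hy0.le hx0.le hqpos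
  constructor
  · rw [key1, hiff1]; constructor <;> intro h <;> linarith
  · rw [key2, hiff2]; constructor <;> intro h <;> linarith
end

section
/- Fix b ∈ (0,1) and consider the logit best-response map g_a : [0,1] → [0,1], g_a(x) = 1/(1 + exp(a(x−b))), which has a unique fixed point x̄(a) ∈ (0,1). There exists a₀ > 0 such that: (i) for 0 < a < a₀ the fixed point x̄(a) is attracting and the iterates g_aⁿ(x) converge to x̄(a) for every x ∈ [0,1]; (ii) for a > a₀ the fixed point x̄(a) is repelling and g_a has an attracting periodic orbit {p, q} of period 2 such that for every x ∈ [0,1] outside a countable set of points whose trajectory eventually equals x̄(a), the iterates g_a^{2n}(x) converge to p or to q. -/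
open Real Filter Set

/-- The logit best-response map `g_a(x) = 1/(1 + exp(a(x-b)))`. -/
noncomputable def g (a b x : ℝ) : ℝ :=
  1 / (1 + Real.exp (a * (x - b)))

/-- combine even and odd subsequence convergence -/
lemma tendsto_of_even_odd {u : ℕ → ℝ} {c : ℝ}
    (he : Tendsto (fun n => u (2*n)) atTop (nhds c))
    (ho : Tendsto (fun n => u (2*n+1)) atTop (nhds c)) :
    Tendsto u atTop (nhds c) := by
  rw [Metric.tendsto_atTop] at he ho ⊢
  intro ε hε
  obtain ⟨N1, h1⟩ := he ε hε
  obtain ⟨N2, h2⟩ := ho ε hε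
  refine ⟨2*N1 + 2*N2 + 2, fun n hn => ?_⟩
  rcases Nat.even_or_odd n with ⟨m, hm⟩ | ⟨m, hm⟩
  · have : n = 2*m := by omega
    rw [this]; exact h1 m (by omega)
  · have : n = 2*m+1 := by omega
    rw [this]; exact h2 m (by omega)

lemma iter_down {h : ℝ → ℝ} (hc : Continuous h) (hm : Monotone h) {L x0 : ℝ}
    (hfix : h L = L) (hLx : L ≤ x0) (hdec : ∀ y, L < y → y ≤ x0 → h y < y) :
    Tendsto (fun n => h^[n] x0) atTop (nhds L) := by
  set u : ℕ → ℝ := fun n => h^[n] x0 with hu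
  have hstep : ∀ n, u (n+1) = h (u n) := fun n => Function.iterate_succ_apply' h n x0
  have hLn : ∀ n, L ≤ u n := by
    intro n; induction n with
    | zero => exact hLx
    | succ k ih => rw [hstep]; calc L = h L := hfix.symm
                                    _ ≤ h (u k) := hm ih
  have h1 : u 1 ≤ u 0 := by
    rcases eq_or_lt_of_le hLx with h | h
    · rw [hstep]; simp only [u]; rw [Function.iterate_zero_apply, ← h, hfix]
    · exact le_of_lt (by rw [hstep]; exact hdec _ h le_rfl)
  have hanti : ∀ n, u (n+1) ≤ u n := by
    intro n; induction n with
    | zero => exact h1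
    | succ k ih =>
        rw [hstep k] at ih
        rw [hstep (k+1), hstep k]
        exact hm ih
  have hAnti : Antitone u := antitone_nat_of_succ_le hanti
  have hbdd : BddBelow (Set.range u) := ⟨L, by rintro _ ⟨n, rfl⟩; exact hLn n⟩
  have hconv : Tendsto u atTop (nhds (⨅ n, u n)) := tendsto_atTop_ciInf hAnti hbdd
  have hle : L ≤ ⨅ n, u n := le_ciInf hLn
  have hfixℓ : h (⨅ n, u n) = ⨅ n, u n := by
    have h2 : Tendsto (fun n => u (n+1)) atTop (nhds (⨅ n, u n)) :=
      hconv.comp (tendsto_add_atTop_nat 1)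
    have h3 : Tendsto (fun n => h (u n)) atTop (nhds (h (⨅ n, u n))) :=
      (hc.continuousAt).tendsto.comp hconv
    have : (fun n => u (n+1)) = fun n => h (u n) := funext hstep
    rw [this] at h2
    exact tendsto_nhds_unique h3 h2
  rcases eq_or_lt_of_le hle with h | h
  · rwa [← h] at hconv
  · exfalso
    have hub : (⨅ n, u n) ≤ u 0 := ciInf_le hbdd 0
    exact absurd hfixℓ (ne_of_lt (hdec _ h hub))

lemma iter_up {h : ℝ → ℝ} (hc : Continuous h) (hm : Monotone h) {U x0 : ℝ}
    (hfix : h U = U) (hxU : x0 ≤ U) (hinc : ∀ y, x0 ≤ y → y < U → y < h y) :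
    Tendsto (fun n => h^[n] x0) atTop (nhds U) := by
  have key := iter_down (h := fun x => -(h (-x))) (L := -U) (x0 := -x0)
    (by continuity) (fun x y hxy => by simpa using hm (neg_le_neg hxy))
    (by simp [hfix]) (by simpa using hxU)
    (fun y h1 h2 => by
      have := hinc (-y) (by linarith) (by linarith)
      show -(h (-y)) < y
      linarith)
  have hiter : ∀ n : ℕ, (fun x => -(h (-x)))^[n] (-x0) = -(h^[n] x0) := by
    intro n; induction n with
    | zero => simp
    | succ k ih => rw [Function.iterate_succ_apply', ih, Function.iterate_succ_apply']; simp
  simp only [hiter] at key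
  have := key.neg
  simpa using this

/-- from positive derivative at a zero, find a point to the left where f < 0 -/
lemma exists_left_neg {f : ℝ → ℝ} {c d lo : ℝ} (hf : HasDerivAt f d c) (hd : 0 < d)
    (hfc : f c = 0) (hlo : lo < c) : ∃ w, lo < w ∧ w < c ∧ f w < 0 := by
  have hs := hasDerivAt_iff_tendsto_slope.mp hf
  have hs' : Tendsto (slope f c) (nhdsWithin c (Set.Iio c)) (nhds d) :=
    hs.mono_left (nhdsWithin_mono c (fun x hx => ne_of_lt hx))
  have hev : ∀ᶠ w in nhdsWithin c (Set.Iio c), 0 < slope f c w :=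
    hs'.eventually (eventually_gt_nhds hd)
  have hmem : Set.Ioo lo c ∈ nhdsWithin c (Set.Iio c) :=
    Ioo_mem_nhdsLT_of_mem ⟨hlo, le_rfl⟩
  obtain ⟨w, hw1, hw2⟩ := (hev.and (eventually_mem_set.mpr hmem)).exists
  refine ⟨w, hw2.1, hw2.2, ?_⟩
  have : slope f c w = (f w - f c) / (w - c) := by
    rw [slope]; simp only [vsub_eq_sub, smul_eq_mul]; ring
  rw [this, hfc, sub_zero] at hw1
  rcases div_pos_iff.mp hw1 with ⟨h1, h2⟩ | ⟨h1, h2⟩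
  · linarith [hw2.2]
  · linarith

lemma exists_right_pos {f : ℝ → ℝ} {c d hi : ℝ} (hf : HasDerivAt f d c) (hd : 0 < d)
    (hfc : f c = 0) (hhi : c < hi) : ∃ w, c < w ∧ w < hi ∧ 0 < f w := by
  have hs := hasDerivAt_iff_tendsto_slope.mp hf
  have hs' : Tendsto (slope f c) (nhdsWithin c (Set.Ioi c)) (nhds d) :=
    hs.mono_left (nhdsWithin_mono c (fun x hx => ne_of_gt hx))
  have hev : ∀ᶠ w in nhdsWithin c (Set.Ioi c), 0 < slope f c w :=
    hs'.eventually (eventually_gt_nhds hd)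
  have hmem : Set.Ioo c hi ∈ nhdsWithin c (Set.Ioi c) :=
    Ioo_mem_nhdsGT_of_mem ⟨le_rfl, hhi⟩
  obtain ⟨w, hw1, hw2⟩ := (hev.and (eventually_mem_set.mpr hmem)).exists
  refine ⟨w, hw2.1, hw2.2, ?_⟩
  have : slope f c w = (f w - f c) / (w - c) := by
    rw [slope]; simp only [vsub_eq_sub, smul_eq_mul]; ring
  rw [this, hfc, sub_zero] at hw1
  rcases div_pos_iff.mp hw1 with ⟨h1, h2⟩ | ⟨h1, h2⟩
  · linarith
  · linarith [hw2.1]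




lemma one_add_exp_pos (u : ℝ) : (0:ℝ) < 1 + Real.exp u := by positivity
lemma one_add_exp_ne (u : ℝ) : (1:ℝ) + Real.exp u ≠ 0 := ne_of_gt (one_add_exp_pos u)

lemma g_pos (a b x : ℝ) : 0 < g a b x := by
  unfold g; positivity

lemma g_lt_one (a b x : ℝ) : g a b x < 1 := by
  unfold g
  rw [div_lt_one (one_add_exp_pos _)]
  linarith [Real.exp_pos (a*(x-b))]

lemma g_mem (a b x : ℝ) : g a b x ∈ Ioo (0:ℝ) 1 := ⟨g_pos a b x, g_lt_one a b x⟩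

lemma g_cont (a b : ℝ) : Continuous (g a b) := by
  unfold g
  exact continuous_const.div (by continuity) (fun x => one_add_exp_ne _)

lemma g_anti_s11 {a : ℝ} (ha : 0 < a) (b : ℝ) : StrictAnti (g a b) := by
  intro x y hxy
  unfold g
  rw [div_lt_div_iff₀ (one_add_exp_pos _) (one_add_exp_pos _)]
  have : Real.exp (a*(x-b)) < Real.exp (a*(y-b)) := by
    apply Real.exp_lt_exp.mpr; nlinarith
  linarith

lemma g_hasDerivAt (a b x : ℝ) :
    HasDerivAt (g a b) (-(a * (g a b x * (1 - g a b x)))) x := by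
  have hu : HasDerivAt (fun y => a*(y-b)) a x := by
    simpa using ((hasDerivAt_id x).sub_const b).const_mul a
  have hE := hu.exp
  have hne := one_add_exp_ne (a*(x-b))
  have hinv := (hE.const_add 1).inv hne
  have hg : g a b = fun y => (1 + Real.exp (a*(y-b)))⁻¹ := by
    funext y; simp [g, one_div]
  rw [hg]
  refine hinv.congr_deriv ?_
  have h1 := one_add_exp_pos (a*(x-b))
  beta_reduce
  field_simp
  ring

/-- at a fixed point of `g`, `log(1-x) - log x = a (x - b)` -/
lemma g_fixed_log {a b x : ℝ} (hx0 : 0 < x) (hx1 : x < 1) (hfix : g a b x = x) :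
    Real.log (1-x) - Real.log x = a * (x - b) := by
  have hE : Real.exp (a*(x-b)) = (1-x)/x := by
    unfold g at hfix
    field_simp at hfix
    field_simp
    linarith
  have := Real.log_exp (a*(x-b))
  rw [hE, Real.log_div (by linarith) (ne_of_gt hx0)] at this
  linarith

noncomputable def Gf (a b x : ℝ) : ℝ :=
  a * g a b x - (Real.log (1-x) - Real.log x) - a*b

/-- fixed points of g∘g lie in (0,1) -/
lemma h_fp_mem {a b y : ℝ} (hy : g a b (g a b y) = y) : y ∈ Ioo (0:ℝ) 1 := by
  rw [← hy]; exact g_mem a b _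

lemma g_eq_iff {a b x : ℝ} (hx0 : 0 < x) (hx1 : x < 1) (w : ℝ) :
    g a b w = x ↔ a*(w-b) = Real.log (1-x) - Real.log x := by
  have hE := Real.exp_pos (a*(w-b))
  rw [g, div_eq_iff (one_add_exp_ne _)]
  constructor
  · intro h
    have hEeq : Real.exp (a*(w-b)) = (1-x)/x := by
      field_simp; nlinarith
    have := congrArg Real.log hEeq
    rwa [Real.log_exp, Real.log_div (by linarith) (ne_of_gt hx0)] at this
  · intro h
    have hEeq : Real.exp (a*(w-b)) = (1-x)/x := by
      rw [show a*(w-b) = Real.log ((1-x)/x) by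
            rw [Real.log_div (by linarith) (ne_of_gt hx0)]; exact h,
          Real.exp_log (div_pos (by linarith) hx0)]
    rw [hEeq]; field_simp; ring

lemma h_fp_iff_G {a b x : ℝ} (hx : x ∈ Ioo (0:ℝ) 1) :
    g a b (g a b x) = x ↔ Gf a b x = 0 := by
  rw [g_eq_iff hx.1 hx.2 (g a b x)]
  unfold Gf
  constructor <;> intro h <;> linarith





noncomputable def Kf (a b x : ℝ) : ℝ :=
  Real.log x + Real.log (1-x) + (a*(x-b) - 2*Real.log (1 + Real.exp (a*(x-b)))) + 2*Real.log a

noncomputable def Kd (a b x : ℝ) : ℝ :=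
  x⁻¹ - (1-x)⁻¹ + a - 2*(a*Real.exp (a*(x-b))/(1 + Real.exp (a*(x-b))))


lemma lin_hasDerivAt (a b x : ℝ) : HasDerivAt (fun y => a*(y-b)) a x := by
  simpa using ((hasDerivAt_id x).sub_const b).const_mul a

lemma K_hasDerivAt {a b x : ℝ} (hx : x ∈ Ioo (0:ℝ) 1) :
    HasDerivAt (Kf a b) (Kd a b x) x := by
  obtain ⟨hx0, hx1⟩ := hx
  have h1 : HasDerivAt (fun y : ℝ => Real.log y) x⁻¹ x := Real.hasDerivAt_log (ne_of_gt hx0)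
  have h2 : HasDerivAt (fun y : ℝ => Real.log (1-y)) ((-1)/(1-x)) x := by
    have hs : HasDerivAt (fun y : ℝ => 1-y) (-1) x := by
      simpa using (hasDerivAt_id' x).const_sub (1:ℝ)
    exact hs.log (by linarith)
  have hu := lin_hasDerivAt a b x
  have hE := hu.exp
  have h3 : HasDerivAt (fun y : ℝ => Real.log (1 + Real.exp (a*(y-b))))
      ((Real.exp (a*(x-b)) * a)/(1 + Real.exp (a*(x-b)))) x :=
    (hE.const_add 1).log (one_add_exp_ne _)
  have := (((h1.add h2).add (hu.sub (h3.const_mul 2))).add_const (2*Real.log a))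
  refine this.congr_deriv ?_
  unfold Kd
  have := one_add_exp_pos (a*(x-b))
  field_simp
  ring

lemma Kd_hasDerivAt {a b x : ℝ} (hx : x ∈ Ioo (0:ℝ) 1) :
    HasDerivAt (Kd a b)
      (-(x^2)⁻¹ - ((1-x)^2)⁻¹ - 2*(a^2*Real.exp (a*(x-b))/(1 + Real.exp (a*(x-b)))^2)) x := by
  obtain ⟨hx0, hx1⟩ := hx
  have h1 : HasDerivAt (fun y : ℝ => y⁻¹) (-1/x^2) x := by
    exact (hasDerivAt_inv (ne_of_gt hx0)).congr_deriv (by ring)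
  have hs : HasDerivAt (fun y : ℝ => 1-y) (-1) x := by
    simpa using (hasDerivAt_id' x).const_sub (1:ℝ)
  have h2 : HasDerivAt (fun y : ℝ => (1-y)⁻¹) (-(-1)/(1-x)^2) x := hs.inv (by linarith)
  have hu := lin_hasDerivAt a b x
  have hE := hu.exp
  have h3 := (hE.const_mul a).div (hE.const_add 1) (one_add_exp_ne _)
  have := ((h1.sub h2).add_const a).sub (h3.const_mul 2)
  refine this.congr_deriv ?_
  have hp := one_add_exp_pos (a*(x-b))
  field_simp
  ring

lemma K_deriv2_neg {a b : ℝ} (ha : 0 < a) {x : ℝ} (hx : x ∈ Ioo (0:ℝ) 1) :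
    deriv^[2] (Kf a b) x < 0 := by
  have hev : deriv (Kf a b) =ᶠ[nhds x] Kd a b := by
    filter_upwards [isOpen_Ioo.mem_nhds hx] with y hy
    exact (K_hasDerivAt hy).deriv
  have : deriv^[2] (Kf a b) x = deriv (deriv (Kf a b)) x := rfl
  rw [this, hev.deriv_eq, (Kd_hasDerivAt hx).deriv]
  obtain ⟨hx0, hx1⟩ := hx
  have h1 : 0 < (x^2)⁻¹ := by positivity
  have h2 : 0 < ((1-x)^2)⁻¹ := by
    have : (0:ℝ) < 1 - x := by linarith
    positivity
  have h3 : 0 < a^2*Real.exp (a*(x-b))/(1 + Real.exp (a*(x-b)))^2 := by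
    have := Real.exp_pos (a*(x-b))
    have := one_add_exp_pos (a*(x-b))
    positivity
  linarith

lemma K_strictConcave {a b : ℝ} (ha : 0 < a) :
    StrictConcaveOn ℝ (Ioo (0:ℝ) 1) (Kf a b) := by
  apply strictConcaveOn_of_deriv2_neg (convex_Ioo 0 1)
  · intro y hy
    exact ((K_hasDerivAt hy).differentiableAt.continuousAt).continuousWithinAt
  · rw [interior_Ioo]
    exact fun y hy => K_deriv2_neg ha hy

lemma K_not_three_zeros {a b : ℝ} (ha : 0 < a) {z1 z2 z3 : ℝ}
    (h1 : z1 ∈ Ioo (0:ℝ) 1) (h3 : z3 ∈ Ioo (0:ℝ) 1)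
    (h12 : z1 < z2) (h23 : z2 < z3)
    (k1 : Kf a b z1 = 0) (k2 : Kf a b z2 = 0) (k3 : Kf a b z3 = 0) : False := by
  have hconc := K_strictConcave (b := b) ha
  set lam := (z3 - z2)/(z3 - z1) with hlam
  set mu := (z2 - z1)/(z3 - z1) with hmu
  have h13 : z1 < z3 := lt_trans h12 h23
  have hd : 0 < z3 - z1 := by linarith
  have hl0 : 0 < lam := div_pos (by linarith) hd
  have hm0 : 0 < mu := div_pos (by linarith) hd
  have hsum : lam + mu = 1 := by rw [hlam, hmu]; field_simp; ring
  have hz2 : lam • z1 + mu • z3 = z2 := by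
    show lam * z1 + mu * z3 = z2
    rw [hlam, hmu]
    field_simp
    ring
  have := hconc.2 h1 h3 (ne_of_lt h13) hl0 hm0 hsum
  rw [hz2, k1, k2, k3] at this
  simp only [smul_eq_mul] at this
  linarith

lemma G_hasDerivAt {a b x : ℝ} (hx : x ∈ Ioo (0:ℝ) 1) :
    HasDerivAt (Gf a b) (x⁻¹ + (1-x)⁻¹ - a^2 * (g a b x * (1 - g a b x))) x := by
  obtain ⟨hx0, hx1⟩ := hx
  have h1 : HasDerivAt (fun y : ℝ => Real.log y) x⁻¹ x := Real.hasDerivAt_log (ne_of_gt hx0)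
  have h2 : HasDerivAt (fun y : ℝ => Real.log (1-y)) ((-1)/(1-x)) x := by
    have hs : HasDerivAt (fun y : ℝ => 1-y) (-1) x := by
      simpa using (hasDerivAt_id' x).const_sub (1:ℝ)
    exact hs.log (by linarith)
  have hg := (g_hasDerivAt a b x).const_mul a
  have := ((hg.sub (h2.sub h1)).sub_const (a*b))
  refine this.congr_deriv ?_
  have : (0:ℝ) < 1 - x := by linarith
  field_simp
  ring

/-- if G' vanishes at x then K vanishes at x -/
lemma K_zero_of_G_deriv_zero {a b x : ℝ} (ha : 0 < a) (hx : x ∈ Ioo (0:ℝ) 1)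
    (hG' : x⁻¹ + (1-x)⁻¹ - a^2 * (g a b x * (1 - g a b x)) = 0) : Kf a b x = 0 := by
  obtain ⟨hx0, hx1⟩ := hx
  have hx1' : (0:ℝ) < 1 - x := by linarith
  have hg0 := g_pos a b x
  have hg1 : 0 < 1 - g a b x := by linarith [g_lt_one a b x]
  have hE := Real.exp_pos (a*(x-b))
  have hp := one_add_exp_pos (a*(x-b))
  -- the product is 1
  have key : x * (1-x) * (g a b x * (1 - g a b x)) * a^2 = 1 := by
    have h' : a^2 * (g a b x * (1 - g a b x)) = x⁻¹ + (1-x)⁻¹ := by linarith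
    have : x * (1-x) * (g a b x * (1 - g a b x)) * a^2
        = x * (1-x) * (a^2 * (g a b x * (1 - g a b x))) := by ring
    rw [this, h']
    field_simp
    ring
  -- identity for log(g(1-g))
  have hgg : g a b x * (1 - g a b x)
      = Real.exp (a*(x-b)) / (1 + Real.exp (a*(x-b)))^2 := by
    simp only [g]
    field_simp
    ring
  have e1 : Real.log (g a b x * (1 - g a b x))
      = a*(x-b) - 2*Real.log (1 + Real.exp (a*(x-b))) := by
    rw [hgg, Real.log_div (ne_of_gt hE) (by positivity), Real.log_exp,
        Real.log_pow]
    push_cast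
    ring
  have e2 : Real.log (a^2) = 2 * Real.log a := by
    rw [Real.log_pow]
    norm_num
  have : Kf a b x = Real.log (x * (1-x) * (g a b x * (1 - g a b x)) * a^2) := by
    rw [Real.log_mul (by positivity) (by positivity),
        Real.log_mul (by positivity) (by positivity),
        Real.log_mul (ne_of_gt hx0) (ne_of_gt hx1'), e1, e2]
    unfold Kf
    ring
  rw [this, key, Real.log_one]

/-- G has at most 3 zeros in (0,1): sorted 4 zeros give a contradiction -/
lemma G_not_four_zeros {a b : ℝ} (ha : 0 < a) {x1 x2 x3 x4 : ℝ}
    (m1 : x1 ∈ Ioo (0:ℝ) 1) (m4 : x4 ∈ Ioo (0:ℝ) 1)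
    (h12 : x1 < x2) (h23 : x2 < x3) (h34 : x3 < x4)
    (z1 : Gf a b x1 = 0) (z2 : Gf a b x2 = 0) (z3 : Gf a b x3 = 0) (z4 : Gf a b x4 = 0) :
    False := by
  have m2 : x2 ∈ Ioo (0:ℝ) 1 := ⟨lt_trans m1.1 h12, lt_trans h23 (lt_trans h34 m4.2)⟩
  have m3 : x3 ∈ Ioo (0:ℝ) 1 := ⟨lt_trans m2.1 h23, lt_trans h34 m4.2⟩
  have rolle : ∀ u v : ℝ, u ∈ Ioo (0:ℝ) 1 → v ∈ Ioo (0:ℝ) 1 → u < v →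
      Gf a b u = 0 → Gf a b v = 0 → ∃ c ∈ Ioo u v, Kf a b c = 0 := by
    intro u v hu hv huv hgu hgv
    have hsub : Icc u v ⊆ Ioo (0:ℝ) 1 := fun y hy => ⟨lt_of_lt_of_le hu.1 hy.1, lt_of_le_of_lt hy.2 hv.2⟩
    obtain ⟨c, hc, hc0⟩ := exists_hasDerivAt_eq_zero
      (f := Gf a b) (f' := fun y => y⁻¹ + (1-y)⁻¹ - a^2 * (g a b y * (1 - g a b y)))
      huv
      (fun y hy => ((G_hasDerivAt (hsub hy)).differentiableAt.continuousAt).continuousWithinAt)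
      (by rw [hgu, hgv])
      (fun y hy => G_hasDerivAt (hsub ⟨le_of_lt hy.1, le_of_lt hy.2⟩))
    have hcm : c ∈ Ioo (0:ℝ) 1 := hsub ⟨le_of_lt hc.1, le_of_lt hc.2⟩
    exact ⟨c, hc, K_zero_of_G_deriv_zero ha hcm hc0⟩
  obtain ⟨c1, hc1, k1⟩ := rolle x1 x2 m1 m2 h12 z1 z2
  obtain ⟨c2, hc2, k2⟩ := rolle x2 x3 m2 m3 h23 z2 z3
  obtain ⟨c3, hc3, k3⟩ := rolle x3 x4 m3 m4 h34 z3 z4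
  have mc1 : c1 ∈ Ioo (0:ℝ) 1 := ⟨lt_trans m1.1 hc1.1, lt_trans hc1.2 m2.2⟩
  have mc3 : c3 ∈ Ioo (0:ℝ) 1 := ⟨lt_trans m3.1 hc3.1, lt_trans hc3.2 m4.2⟩
  exact K_not_three_zeros ha mc1 mc3 (lt_trans hc1.2 hc2.1) (lt_trans hc2.2 hc3.1) k1 k2 k3







/-- uniqueness of the fixed point of `g` -/
lemma g_fp_unique {a b xb : ℝ} (ha : 0 < a) (hgfix : g a b xb = xb) :
    ∀ y, g a b y = y → y = xb := by
  intro y hy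
  rcases lt_trichotomy y xb with h | h | h
  · have := g_anti_s11 ha b h; rw [hy, hgfix] at this; linarith
  · exact h
  · have := g_anti_s11 ha b h; rw [hy, hgfix] at this; linarith

/-- a negative sample of G near 0 -/
lemma G_neg_left {a b : ℝ} (ha : 0 < a) (hb0 : 0 < b) :
    ∀ c ∈ Ioo (0:ℝ) 1, ∃ x, 0 < x ∧ x < c ∧ Gf a b x < 0 := by
  intro c hc
  set x := min (c/2) (Real.exp (-(a + Real.log 2 + 1))) with hxdef
  have hx0 : 0 < x := lt_min (by linarith [hc.1]) (Real.exp_pos _)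
  have hxc : x < c := lt_of_le_of_lt (min_le_left _ _) (by linarith [hc.1])
  have hxe : x ≤ Real.exp (-(a + Real.log 2 + 1)) := min_le_right _ _
  have hlog2 : (0:ℝ) < Real.log 2 := Real.log_pos (by norm_num)
  have hxhalf : x ≤ 1/2 := by
    calc x ≤ Real.exp (-(a + Real.log 2 + 1)) := hxe
    _ ≤ Real.exp (-(Real.log 2)) := Real.exp_le_exp.mpr (by linarith)
    _ = 1/2 := by rw [Real.exp_neg, Real.exp_log (by norm_num)]; norm_num
  refine ⟨x, hx0, hxc, ?_⟩
  have hlogx : Real.log x ≤ -(a + Real.log 2 + 1) := by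
    calc Real.log x ≤ Real.log (Real.exp (-(a + Real.log 2 + 1))) :=
          Real.log_le_log hx0 hxe
    _ = -(a + Real.log 2 + 1) := Real.log_exp _
  have hlog1x : -(Real.log 2) ≤ Real.log (1-x) := by
    have h12 : (1:ℝ)/2 ≤ 1 - x := by linarith
    calc -(Real.log 2) = Real.log (1/2) := by
          rw [show (1:ℝ)/2 = 2⁻¹ by norm_num, Real.log_inv]
    _ ≤ Real.log (1-x) := Real.log_le_log (by norm_num) h12
  have hgx : g a b x < 1 := g_lt_one a b x
  have hgx0 : 0 < g a b x := g_pos a b x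
  unfold Gf
  nlinarith [mul_pos ha hb0]

/-- a positive sample of G near 1 -/
lemma G_pos_right {a b : ℝ} (ha : 0 < a) (hb0 : 0 < b) :
    ∀ c ∈ Ioo (0:ℝ) 1, ∃ x, c < x ∧ x < 1 ∧ 0 < Gf a b x := by
  intro c hc
  set e := min ((1-c)/2) (Real.exp (-(a*b + Real.log 2 + 1))) with hedef
  have he0 : 0 < e := lt_min (by linarith [hc.2]) (Real.exp_pos _)
  have hee : e ≤ Real.exp (-(a*b + Real.log 2 + 1)) := min_le_right _ _
  have hlog2 : (0:ℝ) < Real.log 2 := Real.log_pos (by norm_num)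
  have hab : 0 < a*b := mul_pos ha hb0
  have hehalf : e ≤ 1/2 := by
    calc e ≤ Real.exp (-(a*b + Real.log 2 + 1)) := hee
    _ ≤ Real.exp (-(Real.log 2)) := Real.exp_le_exp.mpr (by linarith)
    _ = 1/2 := by rw [Real.exp_neg, Real.exp_log (by norm_num)]; norm_num
  set x := 1 - e with hxdef
  have hcx : c < x := by
    have : e ≤ (1-c)/2 := min_le_left _ _
    simp only [hxdef]; linarith [hc.2]
  have hx1 : x < 1 := by simp only [hxdef]; linarith
  refine ⟨x, hcx, hx1, ?_⟩
  have hloge : Real.log e ≤ -(a*b + Real.log 2 + 1) := by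
    calc Real.log e ≤ Real.log (Real.exp (-(a*b + Real.log 2 + 1))) :=
          Real.log_le_log he0 hee
    _ = -(a*b + Real.log 2 + 1) := Real.log_exp _
  have hlogx : -(Real.log 2) ≤ Real.log x := by
    have h12 : (1:ℝ)/2 ≤ x := by simp only [hxdef]; linarith
    calc -(Real.log 2) = Real.log (1/2) := by
          rw [show (1:ℝ)/2 = 2⁻¹ by norm_num, Real.log_inv]
    _ ≤ Real.log x := Real.log_le_log (by norm_num) h12
  have h1x : (1:ℝ) - x = e := by simp only [hxdef]; ring
  have hgx0 : 0 < g a b x := g_pos a b x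
  unfold Gf
  rw [h1x]
  nlinarith

lemma G_zero_between {a b u v : ℝ} (hu : u ∈ Ioo (0:ℝ) 1) (hv : v ∈ Ioo (0:ℝ) 1)
    (huv : u < v) (hs : Gf a b u * Gf a b v < 0) :
    ∃ z, u < z ∧ z < v ∧ Gf a b z = 0 := by
  have hsub : Icc u v ⊆ Ioo (0:ℝ) 1 :=
    fun y hy => ⟨lt_of_lt_of_le hu.1 hy.1, lt_of_le_of_lt hy.2 hv.2⟩
  have hcont : ContinuousOn (Gf a b) (Icc u v) := fun y hy =>
    ((G_hasDerivAt (hsub hy)).differentiableAt.continuousAt).continuousWithinAt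
  have hune : Gf a b u ≠ 0 := by intro h; rw [h] at hs; simp at hs
  have hvne : Gf a b v ≠ 0 := by intro h; rw [h] at hs; simp at hs
  rcases lt_or_gt_of_ne hune with hun | hup
  · have hvp : 0 < Gf a b v := by
      rcases lt_or_gt_of_ne hvne with h | h
      · nlinarith
      · exact h
    obtain ⟨z, hz, hz0⟩ := intermediate_value_Icc (le_of_lt huv) hcont
      (show (0:ℝ) ∈ Icc (Gf a b u) (Gf a b v) from ⟨le_of_lt hun, le_of_lt hvp⟩)
    refine ⟨z, ?_, ?_, hz0⟩
    · rcases eq_or_lt_of_le hz.1 with h | h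
      · exact absurd (by rw [h]; exact hz0) hune
      · exact h
    · rcases eq_or_lt_of_le hz.2 with h | h
      · exact absurd (by rw [← h]; exact hz0) hvne
      · exact h
  · have hvn : Gf a b v < 0 := by
      rcases lt_or_gt_of_ne hvne with h | h
      · exact h
      · nlinarith
    obtain ⟨z, hz, hz0⟩ := intermediate_value_Icc' (le_of_lt huv) hcont
      (show (0:ℝ) ∈ Icc (Gf a b v) (Gf a b u) from ⟨le_of_lt hvn, le_of_lt hup⟩)
    refine ⟨z, ?_, ?_, hz0⟩
    · rcases eq_or_lt_of_le hz.1 with h | h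
      · exact absurd (by rw [h]; exact hz0) hune
      · exact h
    · rcases eq_or_lt_of_le hz.2 with h | h
      · exact absurd (by rw [← h]; exact hz0) hvne
      · exact h

/-- structure of period-two points: given one h-fixed point besides xb,
we get a cycle (p,q) around xb and a classification of all h-fixed points -/
lemma fp_structure {a b xb : ℝ} (ha : 0 < a) (hgfix : g a b xb = xb)
    {y0 : ℝ} (h0 : g a b (g a b y0) = y0) (hne : y0 ≠ xb) :
    ∃ p q, p < xb ∧ xb < q ∧ g a b p = q ∧ g a b q = p ∧
      (∀ y, g a b (g a b y) = y → y = p ∨ y = xb ∨ y = q) := by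
  have hxbfp : g a b (g a b xb) = xb := by rw [hgfix, hgfix]
  obtain ⟨p, q, hpx, hxq, hgp, hgq, hpp⟩ :
      ∃ p q, p < xb ∧ xb < q ∧ g a b p = q ∧ g a b q = p ∧ g a b (g a b p) = p := by
    rcases lt_or_gt_of_ne hne with h | h
    · refine ⟨y0, g a b y0, h, ?_, rfl, h0, by rw [h0]⟩
      have := g_anti_s11 ha b h; rwa [hgfix] at this
    · refine ⟨g a b y0, y0, ?_, h, h0, rfl, by rw [h0]⟩
      have := g_anti_s11 ha b h; rwa [hgfix] at this
  have hqq : g a b (g a b q) = q := by rw [hgq, hgp]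
  have Gp : Gf a b p = 0 := (h_fp_iff_G (h_fp_mem hpp)).mp hpp
  have Gq : Gf a b q = 0 := (h_fp_iff_G (h_fp_mem hqq)).mp hqq
  have Gxb : Gf a b xb = 0 := (h_fp_iff_G (h_fp_mem hxbfp)).mp hxbfp
  have memp := h_fp_mem hpp
  have memq := h_fp_mem hqq
  have memxb := h_fp_mem hxbfp
  refine ⟨p, q, hpx, hxq, hgp, hgq, ?_⟩
  intro y hy
  by_contra hc
  push_neg at hc
  obtain ⟨hyp, hyxb, hyq⟩ := hc
  have Gy : Gf a b y = 0 := (h_fp_iff_G (h_fp_mem hy)).mp hy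
  have memy := h_fp_mem hy
  rcases lt_trichotomy y p with h1 | h1 | h1
  · exact G_not_four_zeros ha memy memq h1 hpx hxq Gy Gp Gxb Gq
  · exact hyp h1
  · rcases lt_trichotomy y xb with h2 | h2 | h2
    · exact G_not_four_zeros ha memp memq h1 h2 hxq Gp Gy Gxb Gq
    · exact hyxb h2
    · rcases lt_trichotomy y q with h3 | h3 | h3
      · exact G_not_four_zeros ha memp memq hpx h2 h3 Gp Gxb Gy Gq
      · exact hyq h3
      · exact G_not_four_zeros ha memp memy hpx hxq h3 Gp Gxb Gq Gy

/-- if D < 1, the only fixed point of g∘g is xb -/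
lemma unique_fp_of_D_lt {a b xb : ℝ} (ha : 0 < a) (hb0 : 0 < b)
    (hxb : xb ∈ Ioo (0:ℝ) 1) (hgfix : g a b xb = xb)
    (hD : a*(xb*(1-xb)) < 1) :
    ∀ y, g a b (g a b y) = y → y = xb := by
  by_contra hcon
  push_neg at hcon
  obtain ⟨y0, h0, hne⟩ := hcon
  obtain ⟨p, q, hpx, hxq, hgp, hgq, hclass⟩ := fp_structure ha hgfix h0 hne
  have hpp : g a b (g a b p) = p := by rw [hgp, hgq]
  have hqq : g a b (g a b q) = q := by rw [hgq, hgp]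
  have hxbfp : g a b (g a b xb) = xb := by rw [hgfix, hgfix]
  have memp := h_fp_mem hpp
  have memq := h_fp_mem hqq
  have Gp : Gf a b p = 0 := (h_fp_iff_G memp).mp hpp
  have Gq : Gf a b q = 0 := (h_fp_iff_G memq).mp hqq
  have Gxb : Gf a b xb = 0 := (h_fp_iff_G hxb).mp hxbfp
  have hnz : ∀ z, z ∈ Ioo (0:ℝ) 1 → Gf a b z = 0 → z = p ∨ z = xb ∨ z = q :=
    fun z hz hGz => hclass z ((h_fp_iff_G hz).mpr hGz)
  obtain ⟨hxb0, hxb1⟩ := hxb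
  -- derivative of G at xb is positive
  have hGd : HasDerivAt (Gf a b) (xb⁻¹ + (1-xb)⁻¹ - a^2*(xb*(1-xb))) xb := by
    have := G_hasDerivAt (a := a) (b := b) ⟨hxb0, hxb1⟩
    rwa [hgfix] at this
  have hDpos : 0 < a*(xb*(1-xb)) := mul_pos ha (mul_pos hxb0 (by linarith))
  have hGdpos : 0 < xb⁻¹ + (1-xb)⁻¹ - a^2*(xb*(1-xb)) := by
    have hprod : 0 < xb*(1-xb) := mul_pos hxb0 (by linarith)
    have e : (xb⁻¹ + (1-xb)⁻¹) * (xb*(1-xb)) = 1 := by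
      have hne : xb ≠ 0 := ne_of_gt hxb0
      have hne2 : (1:ℝ) - xb ≠ 0 := by intro h; rw [sub_eq_zero] at h; rw [← h] at hxb1; linarith
      field_simp
      ring
    have hD2 : (a*(xb*(1-xb)))*(a*(xb*(1-xb))) < 1 := by nlinarith
    by_contra hcon
    push_neg at hcon
    have hmul := mul_le_mul_of_nonneg_right
      (show xb⁻¹+(1-xb)⁻¹ ≤ a^2*(xb*(1-xb)) from by linarith) (le_of_lt hprod)
    nlinarith
  -- samples
  obtain ⟨w1, hw1p, hw1x, hw1neg⟩ := exists_left_neg hGd hGdpos Gxb hpx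
  obtain ⟨w2, hw2x, hw2q, hw2pos⟩ := exists_right_pos hGd hGdpos Gxb hxq
  obtain ⟨wl, hwl0, hwlp, hwlneg⟩ := G_neg_left ha hb0 p memp
  obtain ⟨wr, hwrq, hwr1, hwrpos⟩ := G_pos_right ha hb0 q memq
  have memw1 : w1 ∈ Ioo (0:ℝ) 1 := ⟨lt_trans memp.1 hw1p, lt_trans hw1x hxb1⟩
  have memw2 : w2 ∈ Ioo (0:ℝ) 1 := ⟨lt_trans hxb0 hw2x, lt_trans hw2q memq.2⟩
  have memwl : wl ∈ Ioo (0:ℝ) 1 := ⟨hwl0, lt_trans hwlp memp.2⟩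
  have memwr : wr ∈ Ioo (0:ℝ) 1 := ⟨lt_trans memq.1 hwrq, hwr1⟩
  -- sign claims
  have s1 : ∀ y, 0 < y → y < p → Gf a b y < 0 := by
    intro y hy0 hyp
    have memy : y ∈ Ioo (0:ℝ) 1 := ⟨hy0, lt_trans hyp memp.2⟩
    rcases lt_trichotomy (Gf a b y) 0 with h | h | h
    · exact h
    · rcases hnz y memy h with rfl | rfl | rfl
      · exact absurd hyp (lt_irrefl _)
      · exact absurd hyp (by linarith)
      · exact absurd hyp (by linarith)
    · exfalso
      rcases lt_trichotomy wl y with ho | heq | ho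
      · obtain ⟨z, hz1, hz2, hz0⟩ := G_zero_between memwl memy ho (mul_neg_of_neg_of_pos hwlneg h)
        rcases hnz z ⟨lt_trans memwl.1 hz1, lt_trans hz2 memy.2⟩ hz0 with rfl | rfl | rfl
        · linarith
        · linarith
        · linarith
      · rw [heq] at hwlneg; linarith
      · obtain ⟨z, hz1, hz2, hz0⟩ := G_zero_between memy memwl ho (mul_neg_of_pos_of_neg h hwlneg)
        rcases hnz z ⟨lt_trans memy.1 hz1, lt_trans hz2 memwl.2⟩ hz0 with rfl | rfl | rfl
        · linarith
        · linarith
        · linarith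
  have s2 : ∀ y, p < y → y < xb → Gf a b y < 0 := by
    intro y hpy hyx
    have memy : y ∈ Ioo (0:ℝ) 1 := ⟨lt_trans memp.1 hpy, lt_trans hyx hxb1⟩
    rcases lt_trichotomy (Gf a b y) 0 with h | h | h
    · exact h
    · rcases hnz y memy h with rfl | rfl | rfl
      · exact absurd hpy (lt_irrefl _)
      · exact absurd hyx (lt_irrefl _)
      · exact absurd hyx (by linarith)
    · exfalso
      rcases lt_trichotomy w1 y with ho | heq | ho
      · obtain ⟨z, hz1, hz2, hz0⟩ := G_zero_between memw1 memy ho (mul_neg_of_neg_of_pos hw1neg h)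
        rcases hnz z ⟨lt_trans memw1.1 hz1, lt_trans hz2 memy.2⟩ hz0 with rfl | rfl | rfl
        · linarith
        · linarith
        · linarith
      · rw [heq] at hw1neg; linarith
      · obtain ⟨z, hz1, hz2, hz0⟩ := G_zero_between memy memw1 ho (mul_neg_of_pos_of_neg h hw1neg)
        rcases hnz z ⟨lt_trans memy.1 hz1, lt_trans hz2 memw1.2⟩ hz0 with rfl | rfl | rfl
        · linarith
        · linarith
        · linarith
  have s3 : ∀ y, xb < y → y < q → 0 < Gf a b y := by
    intro y hxy hyq
    have memy : y ∈ Ioo (0:ℝ) 1 := ⟨lt_trans hxb0 hxy, lt_trans hyq memq.2⟩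
    rcases lt_trichotomy 0 (Gf a b y) with h | h | h
    · exact h
    · rcases hnz y memy h.symm with rfl | rfl | rfl
      · exact absurd hxy (by linarith)
      · exact absurd hxy (lt_irrefl _)
      · exact absurd hyq (lt_irrefl _)
    · exfalso
      rcases lt_trichotomy w2 y with ho | heq | ho
      · obtain ⟨z, hz1, hz2, hz0⟩ := G_zero_between memw2 memy ho (mul_neg_of_pos_of_neg hw2pos h)
        rcases hnz z ⟨lt_trans memw2.1 hz1, lt_trans hz2 memy.2⟩ hz0 with rfl | rfl | rfl
        · linarith
        · linarith
        · linarith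
      · rw [heq] at hw2pos; linarith
      · obtain ⟨z, hz1, hz2, hz0⟩ := G_zero_between memy memw2 ho (mul_neg_of_neg_of_pos h hw2pos)
        rcases hnz z ⟨lt_trans memy.1 hz1, lt_trans hz2 memw2.2⟩ hz0 with rfl | rfl | rfl
        · linarith
        · linarith
        · linarith
  have s4 : ∀ y, q < y → y < 1 → 0 < Gf a b y := by
    intro y hqy hy1
    have memy : y ∈ Ioo (0:ℝ) 1 := ⟨lt_trans memq.1 hqy, hy1⟩
    rcases lt_trichotomy 0 (Gf a b y) with h | h | h
    · exact h
    · rcases hnz y memy h.symm with rfl | rfl | rfl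
      · exact absurd hqy (by linarith)
      · exact absurd hqy (by linarith)
      · exact absurd hqy (lt_irrefl _)
    · exfalso
      rcases lt_trichotomy wr y with ho | heq | ho
      · obtain ⟨z, hz1, hz2, hz0⟩ := G_zero_between memwr memy ho (mul_neg_of_pos_of_neg hwrpos h)
        rcases hnz z ⟨lt_trans memwr.1 hz1, lt_trans hz2 memy.2⟩ hz0 with rfl | rfl | rfl
        · linarith
        · linarith
        · linarith
      · rw [heq] at hwrpos; linarith
      · obtain ⟨z, hz1, hz2, hz0⟩ := G_zero_between memy memwr ho (mul_neg_of_neg_of_pos h hwrpos)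
        rcases hnz z ⟨lt_trans memy.1 hz1, lt_trans hz2 memwr.2⟩ hz0 with rfl | rfl | rfl
        · linarith
        · linarith
        · linarith
  -- p is a local max of G, q is a local min
  have hmaxp : IsLocalMax (Gf a b) p := by
    have hmem : Ioo (0:ℝ) xb ∈ nhds p := isOpen_Ioo.mem_nhds ⟨memp.1, hpx⟩
    filter_upwards [hmem] with y hy
    rw [Gp]
    rcases lt_trichotomy y p with h | h | h
    · exact le_of_lt (s1 y hy.1 h)
    · rw [h, Gp]
    · exact le_of_lt (s2 y h hy.2)
  have hminq : IsLocalMin (Gf a b) q := by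
    have hmem : Ioo xb (1:ℝ) ∈ nhds q := isOpen_Ioo.mem_nhds ⟨hxq, memq.2⟩
    filter_upwards [hmem] with y hy
    rw [Gq]
    rcases lt_trichotomy y q with h | h | h
    · exact le_of_lt (s3 y hy.1 h)
    · rw [h, Gq]
    · exact le_of_lt (s4 y h hy.2)
  have kp : Kf a b p = 0 :=
    K_zero_of_G_deriv_zero ha memp (hmaxp.hasDerivAt_eq_zero (G_hasDerivAt memp))
  have kq : Kf a b q = 0 :=
    K_zero_of_G_deriv_zero ha memq (hminq.hasDerivAt_eq_zero (G_hasDerivAt memq))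
  -- Rolle between xb and q
  have hsub : Icc xb q ⊆ Ioo (0:ℝ) 1 :=
    fun y hy => ⟨lt_of_lt_of_le hxb0 hy.1, lt_of_le_of_lt hy.2 memq.2⟩
  obtain ⟨c, hc, hc0⟩ := exists_hasDerivAt_eq_zero
    (f := Gf a b) (f' := fun y => y⁻¹ + (1-y)⁻¹ - a^2 * (g a b y * (1 - g a b y)))
    hxq
    (fun y hy => ((G_hasDerivAt (hsub hy)).differentiableAt.continuousAt).continuousWithinAt)
    (by rw [Gxb, Gq])
    (fun y hy => G_hasDerivAt (hsub ⟨le_of_lt hy.1, le_of_lt hy.2⟩))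
  have kc : Kf a b c = 0 :=
    K_zero_of_G_deriv_zero ha (hsub ⟨le_of_lt hc.1, le_of_lt hc.2⟩) hc0
  exact K_not_three_zeros ha memp memq (lt_trans hpx hc.1) hc.2 kp kc kq

/-- if D > 1, there is a 2-cycle and the fixed points of g∘g are exactly p, xb, q -/
lemma cycle_of_D_gt {a b xb : ℝ} (ha : 0 < a)
    (hxb : xb ∈ Ioo (0:ℝ) 1) (hgfix : g a b xb = xb)
    (hD : 1 < a*(xb*(1-xb))) :
    ∃ p q, p < xb ∧ xb < q ∧ g a b p = q ∧ g a b q = p ∧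
      (∀ y, g a b (g a b y) = y → y = p ∨ y = xb ∨ y = q) := by
  obtain ⟨hxb0, hxb1⟩ := hxb
  -- derivative of h - id at xb
  have hh : HasDerivAt (fun y => g a b (g a b y))
      ((-(a * (xb * (1 - xb)))) * (-(a * (xb * (1 - xb))))) xb := by
    have h1 := g_hasDerivAt a b xb
    have h2 := g_hasDerivAt a b (g a b xb)
    have := h2.comp xb h1
    rw [hgfix] at this
    rw [hgfix] at this
    simpa [Function.comp_def] using this
  have hfder : HasDerivAt (fun y => g a b (g a b y) - y)
      ((-(a * (xb * (1 - xb)))) * (-(a * (xb * (1 - xb)))) - 1) xb :=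
    hh.sub (hasDerivAt_id xb)
  have hdpos : 0 < (-(a * (xb * (1 - xb)))) * (-(a * (xb * (1 - xb)))) - 1 := by nlinarith
  have hf0 : g a b (g a b xb) - xb = 0 := by rw [hgfix, hgfix]; ring
  obtain ⟨w, hw0, hwx, hwneg⟩ := exists_left_neg hfder hdpos hf0 hxb0
  -- IVT between 0 and w
  have hcont : Continuous (fun y => g a b (g a b y) - y) :=
    ((g_cont a b).comp (g_cont a b)).sub continuous_id
  have hstart : 0 < g a b (g a b 0) - 0 := by
    have := g_pos a b (g a b 0); linarith
  obtain ⟨p, hpmem, hfp⟩ := intermediate_value_Icc' (le_of_lt hw0) hcont.continuousOn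
    (show (0:ℝ) ∈ Icc (g a b (g a b w) - w) (g a b (g a b 0) - 0) from
      ⟨le_of_lt hwneg, le_of_lt hstart⟩)
  have hppfix : g a b (g a b p) = p := by linarith [hfp, sub_eq_zero.mp hfp]
  have hpx : p ≠ xb := by
    intro h; rw [h] at hpmem; linarith [hpmem.2]
  exact fp_structure ha hgfix hppfix hpx





section dyn
variable {a b xb : ℝ}

lemma h_cont (a b : ℝ) : Continuous (fun y => g a b (g a b y)) :=
  (g_cont a b).comp (g_cont a b)

lemma h_mono (ha : 0 < a) (b : ℝ) : Monotone (fun y => g a b (g a b y)) :=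
  (((g_anti_s11 ha b).comp (g_anti_s11 ha b)).monotone)

/-- no fixed point weakly below y (y itself included) implies y < h y -/
lemma sign_up (ha : 0 < a) {y : ℝ}
    (hnofp : ∀ z, z ≤ y → g a b (g a b z) ≠ z) : y < g a b (g a b y) := by
  rcases lt_trichotomy y (g a b (g a b y)) with hlt | heq | hgt
  · exact hlt
  · exact absurd heq.symm (hnofp y le_rfl)
  · exfalso
    set w := min y 0 - 1 with hw
    have hwy : w < y := by
      have := min_le_left y 0; simp only [hw]; linarith
    have hwneg : w < 0 := by
      have := min_le_right y 0; simp only [hw]; linarith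
    have hfw : 0 < g a b (g a b w) - w := by
      have := g_pos a b (g a b w); linarith
    have hfy : g a b (g a b y) - y < 0 := by linarith
    have hcont : ContinuousOn (fun z => g a b (g a b z) - z) (Icc w y) :=
      ((h_cont a b).sub continuous_id).continuousOn
    obtain ⟨z, hz, hz0⟩ := intermediate_value_Icc' (le_of_lt hwy) hcont
      (show (0:ℝ) ∈ Icc (g a b (g a b y) - y) (g a b (g a b w) - w) from
        ⟨le_of_lt hfy, le_of_lt hfw⟩)
    exact hnofp z hz.2 (by linarith [sub_eq_zero.mp hz0])

/-- no fixed point weakly above y implies h y < y -/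
lemma sign_down (ha : 0 < a) {y : ℝ}
    (hnofp : ∀ z, y ≤ z → g a b (g a b z) ≠ z) : g a b (g a b y) < y := by
  rcases lt_trichotomy (g a b (g a b y)) y with hlt | heq | hgt
  · exact hlt
  · exact absurd heq (hnofp y le_rfl)
  · exfalso
    set w := max y 1 + 1 with hw
    have hwy : y < w := by
      have := le_max_left y 1; simp only [hw]; linarith
    have hwbig : 1 < w := by
      have := le_max_right y 1; simp only [hw]; linarith
    have hfw : g a b (g a b w) - w < 0 := by
      have := g_lt_one a b (g a b w); linarith
    have hfy : 0 < g a b (g a b y) - y := by linarith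
    have hcont : ContinuousOn (fun z => g a b (g a b z) - z) (Icc y w) :=
      ((h_cont a b).sub continuous_id).continuousOn
    obtain ⟨z, hz, hz0⟩ := intermediate_value_Icc' (le_of_lt hwy) hcont
      (show (0:ℝ) ∈ Icc (g a b (g a b w) - w) (g a b (g a b y) - y) from
        ⟨le_of_lt hfw, le_of_lt hfy⟩)
    exact hnofp z hz.1 (by linarith [sub_eq_zero.mp hz0])

/-- part (i) dynamics: global convergence of h-orbits to xb -/
lemma conv_all_of_unique (ha : 0 < a) (hgfix : g a b xb = xb)
    (huniq : ∀ y, g a b (g a b y) = y → y = xb) :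
    ∀ x : ℝ, Tendsto (fun n => (fun y => g a b (g a b y))^[n] x) atTop (nhds xb) := by
  intro x
  have hfixh : g a b (g a b xb) = xb := by rw [hgfix, hgfix]
  rcases lt_trichotomy x xb with hlt | heq | hgt
  · exact iter_up (h_cont a b) (h_mono ha b) hfixh (le_of_lt hlt)
      (fun z _ hz2 => sign_up ha (fun w hw hfp => by
        have := huniq w hfp; rw [this] at hw; linarith))
  · rw [heq]
    have : ∀ n, (fun y => g a b (g a b y))^[n] xb = xb :=
      fun n => Function.iterate_fixed (f := fun y => g a b (g a b y)) (x := xb) hfixh n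
    simp only [this]
    exact tendsto_const_nhds
  · exact iter_down (h_cont a b) (h_mono ha b) hfixh (le_of_lt hgt)
      (fun z hz1 _ => sign_down ha (fun w hw hfp => by
        have := huniq w hfp; rw [this] at hw; linarith))

/-- part (ii) dynamics -/
lemma conv_cycle (ha : 0 < a) (hxb : xb ∈ Ioo (0:ℝ) 1) (hgfix : g a b xb = xb)
    (hD : 1 < a*(xb*(1-xb))) {p q : ℝ}
    (hpx : p < xb) (hxq : xb < q) (hgp : g a b p = q) (hgq : g a b q = p)
    (hclass : ∀ y, g a b (g a b y) = y → y = p ∨ y = xb ∨ y = q) :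
    (∀ y, y < xb → Tendsto (fun n => (fun x => g a b (g a b x))^[n] y) atTop (nhds p)) ∧
    (∀ y, xb < y → Tendsto (fun n => (fun x => g a b (g a b x))^[n] y) atTop (nhds q)) := by
  obtain ⟨hxb0, hxb1⟩ := hxb
  have hpp : g a b (g a b p) = p := by rw [hgp, hgq]
  have hqq : g a b (g a b q) = q := by rw [hgq, hgp]
  have hh : HasDerivAt (fun y => g a b (g a b y))
      ((-(a * (xb * (1 - xb)))) * (-(a * (xb * (1 - xb))))) xb := by
    have h1 := g_hasDerivAt a b xb
    have h2 := g_hasDerivAt a b (g a b xb)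
    have := h2.comp xb h1
    rw [hgfix] at this
    rw [hgfix] at this
    simpa [Function.comp_def] using this
  have hfder : HasDerivAt (fun y => g a b (g a b y) - y)
      ((-(a * (xb * (1 - xb)))) * (-(a * (xb * (1 - xb)))) - 1) xb :=
    hh.sub (hasDerivAt_id xb)
  have hdpos : 0 < (-(a * (xb * (1 - xb)))) * (-(a * (xb * (1 - xb)))) - 1 := by nlinarith
  have hf0 : g a b (g a b xb) - xb = 0 := by rw [hgfix, hgfix]; ring
  obtain ⟨w1, hw1p, hw1x, hw1neg⟩ := exists_left_neg hfder hdpos hf0 hpx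
  obtain ⟨w2, hw2x, hw2q, hw2pos⟩ := exists_right_pos hfder hdpos hf0 hxq
  -- helper: a sign change of h - id between u and v gives a fixed point in [u,v]
  have fpbtw : ∀ u v : ℝ, u < v →
      (g a b (g a b u) - u) * (g a b (g a b v) - v) < 0 →
      ∃ z, u ≤ z ∧ z ≤ v ∧ g a b (g a b z) = z := by
    intro u v huv hprod
    have hcont : ContinuousOn (fun z => g a b (g a b z) - z) (Icc u v) :=
      ((h_cont a b).sub continuous_id).continuousOn
    rcases lt_trichotomy (g a b (g a b u) - u) 0 with hu | hu | hu
    · have hv : 0 < g a b (g a b v) - v := by nlinarith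
      obtain ⟨z, hz, hz0⟩ := intermediate_value_Icc (le_of_lt huv) hcont
        (show (0:ℝ) ∈ Icc (g a b (g a b u) - u) (g a b (g a b v) - v) from
          ⟨le_of_lt hu, le_of_lt hv⟩)
      exact ⟨z, hz.1, hz.2, by linarith [sub_eq_zero.mp hz0]⟩
    · rw [hu] at hprod; simp at hprod
    · have hv : g a b (g a b v) - v < 0 := by nlinarith
      obtain ⟨z, hz, hz0⟩ := intermediate_value_Icc' (le_of_lt huv) hcont
        (show (0:ℝ) ∈ Icc (g a b (g a b v) - v) (g a b (g a b u) - u) from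
          ⟨le_of_lt hv, le_of_lt hu⟩)
      exact ⟨z, hz.1, hz.2, by linarith [sub_eq_zero.mp hz0]⟩
  -- sign on (p, xb)
  have sB : ∀ y, p < y → y < xb → g a b (g a b y) < y := by
    intro y hpy hyx
    rcases lt_trichotomy (g a b (g a b y)) y with h | h | h
    · exact h
    · rcases hclass y h with rfl | rfl | rfl
      · exact absurd hpy (lt_irrefl _)
      · exact absurd hyx (lt_irrefl _)
      · exact absurd hyx (by linarith)
    · exfalso
      have hfy : 0 < g a b (g a b y) - y := by linarith
      rcases lt_trichotomy y w1 with ho | heq | ho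
      · obtain ⟨z, hz1, hz2, hzfp⟩ := fpbtw y w1 ho (mul_neg_of_pos_of_neg hfy hw1neg)
        rcases hclass z hzfp with rfl | rfl | rfl
        · linarith
        · linarith
        · linarith
      · rw [heq] at hfy; linarith
      · obtain ⟨z, hz1, hz2, hzfp⟩ := fpbtw w1 y ho (mul_neg_of_neg_of_pos hw1neg hfy)
        rcases hclass z hzfp with rfl | rfl | rfl
        · linarith
        · linarith
        · linarith
  -- sign on (xb, q)
  have sC : ∀ y, xb < y → y < q → y < g a b (g a b y) := by
    intro y hxy hyq
    rcases lt_trichotomy y (g a b (g a b y)) with h | h | h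
    · exact h
    · rcases hclass y h.symm with rfl | rfl | rfl
      · exact absurd hxy (by linarith)
      · exact absurd hxy (lt_irrefl _)
      · exact absurd hyq (lt_irrefl _)
    · exfalso
      have hfy : g a b (g a b y) - y < 0 := by linarith
      rcases lt_trichotomy y w2 with ho | heq | ho
      · obtain ⟨z, hz1, hz2, hzfp⟩ := fpbtw y w2 ho (mul_neg_of_neg_of_pos hfy hw2pos)
        rcases hclass z hzfp with rfl | rfl | rfl
        · linarith
        · linarith
        · linarith
      · rw [heq] at hfy; linarith
      · obtain ⟨z, hz1, hz2, hzfp⟩ := fpbtw w2 y ho (mul_neg_of_pos_of_neg hw2pos hfy)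
        rcases hclass z hzfp with rfl | rfl | rfl
        · linarith
        · linarith
        · linarith
  have sA : ∀ y, y < p → y < g a b (g a b y) :=
    fun y hyp => sign_up ha (fun z hz hfp => by
      rcases hclass z hfp with rfl | rfl | rfl
      · linarith
      · linarith
      · linarith)
  have sD : ∀ y, q < y → g a b (g a b y) < y :=
    fun y hqy => sign_down ha (fun z hz hfp => by
      rcases hclass z hfp with rfl | rfl | rfl
      · linarith
      · linarith
      · linarith)
  constructor
  · intro y hyx
    rcases lt_trichotomy y p with hlt | heq | hgt
    · exact iter_up (h_cont a b) (h_mono ha b) hpp (le_of_lt hlt)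
        (fun z _ hz2 => sA z hz2)
    · rw [heq]
      have : ∀ n, (fun x => g a b (g a b x))^[n] p = p :=
        fun n => Function.iterate_fixed (f := fun x => g a b (g a b x)) (x := p) hpp n
      simp only [this]
      exact tendsto_const_nhds
    · exact iter_down (h_cont a b) (h_mono ha b) hpp (le_of_lt hgt)
        (fun z hz1 hz2 => sB z hz1 (lt_of_le_of_lt hz2 hyx))
  · intro y hxy
    rcases lt_trichotomy y q with hlt | heq | hgt
    · exact iter_up (h_cont a b) (h_mono ha b) hqq (le_of_lt hlt)
        (fun z hz1 hz2 => sC z (lt_of_lt_of_le hxy hz1) hz2)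
    · rw [heq]
      have : ∀ n, (fun x => g a b (g a b x))^[n] q = q :=
        fun n => Function.iterate_fixed (f := fun x => g a b (g a b x)) (x := q) hqq n
      simp only [this]
      exact tendsto_const_nhds
    · exact iter_down (h_cont a b) (h_mono ha b) hqq (le_of_lt hgt)
        (fun z hz1 _ => sD z hz1)

/-- iterates of g at even/odd times -/
lemma iterate_two_mul (a b : ℝ) (n : ℕ) (x : ℝ) :
    (g a b)^[2*n] x = (fun y => g a b (g a b y))^[n] x := by
  rw [Function.iterate_mul]
  have h2 : (g a b)^[2] = fun y => g a b (g a b y) := by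
    funext y
    rw [show (2:ℕ) = 1 + 1 from rfl, Function.iterate_add_apply, Function.iterate_one]
  rw [h2]

lemma iterate_two_mul_add_one (a b : ℝ) (n : ℕ) (x : ℝ) :
    (g a b)^[2*n+1] x = (fun y => g a b (g a b y))^[n] (g a b x) := by
  rw [Function.iterate_succ_apply, iterate_two_mul]

/-- part (i): convergence of g-orbits -/
lemma g_orbit_conv (ha : 0 < a) (hgfix : g a b xb = xb)
    (huniq : ∀ y, g a b (g a b y) = y → y = xb) :
    ∀ x : ℝ, Tendsto (fun n => (g a b)^[n] x) atTop (nhds xb) := by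
  intro x
  apply tendsto_of_even_odd
  · have := conv_all_of_unique ha hgfix huniq x
    simpa only [iterate_two_mul] using this
  · have := conv_all_of_unique ha hgfix huniq (g a b x)
    simpa only [iterate_two_mul_add_one] using this

end dyn



/-- strict antitonicity of M(t) = log(1-t) - log t on (0,1) -/
lemma M_lt {u v : ℝ} (hu : u ∈ Ioo (0:ℝ) 1) (hv : v ∈ Ioo (0:ℝ) 1) (huv : u < v) :
    Real.log (1-v) - Real.log v < Real.log (1-u) - Real.log u := by
  have h1 : Real.log (1-v) < Real.log (1-u) :=
    Real.log_lt_log (by linarith [hv.2]) (by linarith)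
  have h2 : Real.log u < Real.log v := Real.log_lt_log hu.1 huv
  linarith

lemma M_pos {t : ℝ} (ht0 : 0 < t) (ht : t < 1/2) :
    0 < Real.log (1-t) - Real.log t := by
  have := Real.log_lt_log ht0 (show t < 1 - t by linarith)
  linarith

lemma M_neg {t : ℝ} (ht : 1/2 < t) (ht1 : t < 1) :
    Real.log (1-t) - Real.log t < 0 := by
  have := Real.log_lt_log (show (0:ℝ) < 1 - t by linarith) (show 1 - t < t by linarith)
  linarith

/-- location of the fixed point between b and 1/2 -/
lemma xbar_loc {a b t : ℝ} (ha : 0 < a) (hb0 : 0 < b) (hb1 : b < 1)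
    (ht : t ∈ Ioo (0:ℝ) 1) (he : Real.log (1-t) - Real.log t = a*(t-b)) :
    (b < 1/2 → b < t ∧ t < 1/2) ∧ (b = 1/2 → t = 1/2) ∧ (1/2 < b → 1/2 < t ∧ t < b) := by
  obtain ⟨ht0, ht1⟩ := ht
  have hM12 : Real.log (1-(1/2:ℝ)) - Real.log (1/2) = 0 := by norm_num
  refine ⟨?_, ?_, ?_⟩
  · intro hb
    constructor
    · by_contra hc
      push_neg at hc
      rcases eq_or_lt_of_le hc with h | h
      · rw [h] at he
        have := M_pos (show (0:ℝ) < b from hb0) hb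
        simp at he
        linarith
      · have h1 := M_pos ht0 (lt_trans h hb)
        nlinarith
    · by_contra hc
      push_neg at hc
      rcases eq_or_lt_of_le hc with h | h
      · rw [← h] at he; rw [hM12] at he; nlinarith
      · have h1 := M_neg h ht1
        nlinarith
  · intro hb
    rcases lt_trichotomy t (1/2 : ℝ) with h | h | h
    · have h1 := M_pos ht0 h
      rw [hb] at he
      nlinarith
    · exact h
    · have h1 := M_neg h ht1
      rw [hb] at he
      nlinarith
  · intro hb
    constructor
    · by_contra hc
      push_neg at hc
      rcases eq_or_lt_of_le hc with h | h
      · rw [h] at he; rw [hM12] at he; nlinarith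
      · have h1 := M_pos ht0 h
        nlinarith
    · by_contra hc
      push_neg at hc
      rcases eq_or_lt_of_le hc with h | h
      · rw [← h] at he
        have := M_neg (show (1:ℝ)/2 < b from hb) hb1
        simp at he
        linarith
      · have h1 := M_neg (lt_trans hb h) ht1
        nlinarith

/-- strict monotonicity of D(a) = a xb(a) (1 - xb(a)) in a -/
lemma D_strict_mono {a1 a2 b t1 t2 : ℝ} (hb0 : 0 < b) (hb1 : b < 1)
    (ht1 : t1 ∈ Ioo (0:ℝ) 1) (ht2 : t2 ∈ Ioo (0:ℝ) 1)
    (he1 : Real.log (1-t1) - Real.log t1 = a1*(t1-b))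
    (he2 : Real.log (1-t2) - Real.log t2 = a2*(t2-b))
    (ha1 : 0 < a1) (h12 : a1 < a2) :
    a1*(t1*(1-t1)) < a2*(t2*(1-t2)) := by
  have ha2 : 0 < a2 := lt_trans ha1 h12
  have loc1 := xbar_loc ha1 hb0 hb1 ht1 he1
  have loc2 := xbar_loc ha2 hb0 hb1 ht2 he2
  rcases lt_trichotomy b (1/2 : ℝ) with hb | hb | hb
  · obtain ⟨hbt1, ht1h⟩ := loc1.1 hb
    obtain ⟨hbt2, ht2h⟩ := loc2.1 hb
    have hM1 : 0 < Real.log (1-t1) - Real.log t1 := M_pos ht1.1 ht1h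
    have hM2 : 0 < Real.log (1-t2) - Real.log t2 := M_pos ht2.1 ht2h
    -- step 1 : t2 < t1
    have hts : t2 < t1 := by
      rcases lt_trichotomy t1 t2 with h | h | h
      · exfalso
        have hMlt := M_lt ht1 ht2 h
        nlinarith
      · exfalso
        rw [h] at he1
        nlinarith
      · exact h
    have hM12 : Real.log (1-t1) - Real.log t1 < Real.log (1-t2) - Real.log t2 :=
      M_lt ht2 ht1 hts
    -- R decomposition
    have hne1 : t1 - b ≠ 0 := by intro h; rw [sub_eq_zero] at h; rw [h] at hbt1; linarith
    have hne2 : t2 - b ≠ 0 := by intro h; rw [sub_eq_zero] at h; rw [h] at hbt2; linarith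
    have hR1 : t1*(1-t1)/(t1-b) = b*(1-b)/(t1-b) + (1-2*b) - (t1-b) := by
      field_simp
      ring
    have hR2 : t2*(1-t2)/(t2-b) = b*(1-b)/(t2-b) + (1-2*b) - (t2-b) := by
      field_simp
      ring
    have hRlt : t1*(1-t1)/(t1-b) < t2*(1-t2)/(t2-b) := by
      rw [hR1, hR2]
      have hd : b*(1-b)/(t1-b) < b*(1-b)/(t2-b) :=
        div_lt_div_of_pos_left (by nlinarith) (by linarith) (by linarith)
      linarith
    have hRpos : 0 < t1*(1-t1)/(t1-b) :=
      div_pos (by nlinarith [ht1.1, ht1.2]) (by linarith)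
    have hD1 : (Real.log (1-t1) - Real.log t1) * (t1*(1-t1)/(t1-b)) = a1*(t1*(1-t1)) := by
      rw [he1]
      field_simp
    have hD2 : (Real.log (1-t2) - Real.log t2) * (t2*(1-t2)/(t2-b)) = a2*(t2*(1-t2)) := by
      rw [he2]
      field_simp
    rw [← hD1, ← hD2]
    exact mul_lt_mul'' hM12 hRlt (le_of_lt hM1) (le_of_lt hRpos)
  · have e1 : t1 = 1/2 := loc1.2.1 hb
    have e2 : t2 = 1/2 := loc2.2.1 hb
    rw [e1, e2]
    nlinarith
  · obtain ⟨hbt1, ht1h⟩ := loc1.2.2 hb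
    obtain ⟨hbt2, ht2h⟩ := loc2.2.2 hb
    -- N_i = -M_i > 0
    have hM1 : Real.log (1-t1) - Real.log t1 < 0 := M_neg hbt1 ht1.2
    have hM2 : Real.log (1-t2) - Real.log t2 < 0 := M_neg hbt2 ht2.2
    have hts : t1 < t2 := by
      rcases lt_trichotomy t1 t2 with h | h | h
      · exact h
      · exfalso
        rw [h] at he1
        nlinarith
      · exfalso
        have hMlt := M_lt ht2 ht1 h
        nlinarith
    have hM12 : Real.log (1-t2) - Real.log t2 < Real.log (1-t1) - Real.log t1 :=
      M_lt ht1 ht2 hts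
    have hne1 : b - t1 ≠ 0 := by intro h; rw [sub_eq_zero] at h; rw [← h] at ht1h; linarith
    have hne2 : b - t2 ≠ 0 := by intro h; rw [sub_eq_zero] at h; rw [← h] at ht2h; linarith
    have hR1 : t1*(1-t1)/(b-t1) = b*(1-b)/(b-t1) - (1-2*b) - (b-t1) := by
      field_simp
      ring
    have hR2 : t2*(1-t2)/(b-t2) = b*(1-b)/(b-t2) - (1-2*b) - (b-t2) := by
      field_simp
      ring
    have hRlt : t1*(1-t1)/(b-t1) < t2*(1-t2)/(b-t2) := by
      rw [hR1, hR2]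
      have hd : b*(1-b)/(b-t1) < b*(1-b)/(b-t2) :=
        div_lt_div_of_pos_left (by nlinarith) (by linarith) (by linarith)
      linarith
    have hRpos : 0 < t1*(1-t1)/(b-t1) :=
      div_pos (by nlinarith [ht1.1, ht1.2]) (by linarith)
    have hD1 : (Real.log t1 - Real.log (1-t1)) * (t1*(1-t1)/(b-t1)) = a1*(t1*(1-t1)) := by
      have hN1 : Real.log t1 - Real.log (1-t1) = a1*(b-t1) := by linarith [he1]
      rw [hN1]
      field_simp
    have hD2 : (Real.log t2 - Real.log (1-t2)) * (t2*(1-t2)/(b-t2)) = a2*(t2*(1-t2)) := by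
      have hN2 : Real.log t2 - Real.log (1-t2) = a2*(b-t2) := by linarith [he2]
      rw [hN2]
      field_simp
    rw [← hD1, ← hD2]
    exact mul_lt_mul'' (by linarith) hRlt (by linarith) (le_of_lt hRpos)


/-- Dynamics of the logit best-response map (`σ = 1` case): below the threshold `a₀`
the fixed point attracts all of `[0,1]`; above it the fixed point is repelling and
there is an attracting period-2 orbit attracting all points except the countably many
whose trajectory falls into the fixed point. -/
theorem logit_best_response_dynamics (b : ℝ) (hb : b ∈ Set.Ioo (0:ℝ) 1)
    (xbar : ℝ → ℝ)
    (hfix : ∀ a > (0:ℝ), xbar a ∈ Set.Ioo (0:ℝ) 1 ∧ g a b (xbar a) = xbar a) :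
    ∃ a₀ > (0:ℝ),
      (∀ a : ℝ, 0 < a → a < a₀ → IsAttractingFixedPt (g a b) (xbar a) ∧
        ∀ x ∈ Set.Icc (0:ℝ) 1,
          Filter.Tendsto (fun n => (g a b)^[n] x) Filter.atTop (nhds (xbar a))) ∧
      (∀ a : ℝ, a₀ < a → IsRepellingFixedPt (g a b) (xbar a) ∧
        ∃ p q : ℝ, p ≠ q ∧ g a b p = q ∧ g a b q = p ∧
          IsAttractingFixedPt (fun x => g a b (g a b x)) p ∧
          {x | x ∈ Set.Icc (0:ℝ) 1 ∧ ∃ n : ℕ, (g a b)^[n] x = xbar a}.Countable ∧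
          ∀ x ∈ Set.Icc (0:ℝ) 1, (∃ n : ℕ, (g a b)^[n] x = xbar a) ∨
            Filter.Tendsto (fun n => (g a b)^[2*n] x) Filter.atTop (nhds p) ∨
            Filter.Tendsto (fun n => (g a b)^[2*n] x) Filter.atTop (nhds q)) := by
  obtain ⟨hb0, hb1⟩ := hb
  -- the fixed point equation for each a > 0
  have hfe : ∀ a : ℝ, 0 < a →
      Real.log (1 - xbar a) - Real.log (xbar a) = a * (xbar a - b) := by
    intro a ha
    obtain ⟨hmem, hgfix⟩ := hfix a ha
    exact g_fixed_log hmem.1 hmem.2 hgfix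
  -- D is strictly monotone
  have hDmono : ∀ a1 a2 : ℝ, 0 < a1 → a1 < a2 →
      a1*(xbar a1*(1-xbar a1)) < a2*(xbar a2*(1-xbar a2)) := by
    intro a1 a2 ha1 h12
    exact D_strict_mono hb0 hb1 (hfix a1 ha1).1 (hfix a2 (by linarith)).1
      (hfe a1 ha1) (hfe a2 (by linarith)) ha1 h12
  set S : Set ℝ := {a : ℝ | 0 < a ∧ a*(xbar a*(1-xbar a)) ≤ 1} with hS
  have h2S : (2:ℝ) ∈ S := by
    constructor
    · norm_num
    · have := (hfix 2 (by norm_num)).1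
      obtain ⟨h1, h2⟩ := this
      nlinarith [sq_nonneg (xbar 2 - 1/2)]
  have hbb : 0 < b*(1-b) := mul_pos hb0 (by linarith)
  have hbdd : BddAbove S := by
    refine ⟨1/(b*(1-b)), fun s hs => ?_⟩
    obtain ⟨hs0, hsD⟩ := hs
    by_contra hc
    push_neg at hc
    -- then D s > 1
    have hmem := (hfix s hs0).1
    have he := hfe s hs0
    have loc := xbar_loc hs0 hb0 hb1 hmem he
    have hprod : 0 ≤ (xbar s - b)*(1 - xbar s - b) := by
      rcases lt_trichotomy b (1/2 : ℝ) with h | h | h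
      · obtain ⟨l1, l2⟩ := loc.1 h
        nlinarith
      · have := loc.2.1 h
        nlinarith
      · obtain ⟨l1, l2⟩ := loc.2.2 h
        nlinarith
    have hge : b*(1-b) ≤ xbar s * (1 - xbar s) := by nlinarith
    have : 1 < s * (xbar s * (1 - xbar s)) := by
      have h1 : 1 < s * (b*(1-b)) := by
        rw [div_lt_iff₀ hbb] at hc
        linarith [hc]
      nlinarith
    linarith
  set a₀ := sSup S with ha₀
  have ha₀ge2 : (2:ℝ) ≤ a₀ := le_csSup hbdd h2S
  have hlt : ∀ a : ℝ, 0 < a → a < a₀ → a*(xbar a*(1-xbar a)) < 1 := by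
    intro a ha haa
    obtain ⟨s, hsS, has⟩ := exists_lt_of_lt_csSup ⟨2, h2S⟩ haa
    calc a*(xbar a*(1-xbar a)) < s*(xbar s*(1-xbar s)) := hDmono a s ha has
    _ ≤ 1 := hsS.2
  have hgt : ∀ a : ℝ, a₀ < a → 1 < a*(xbar a*(1-xbar a)) := by
    intro a haa
    have ha : 0 < a := by linarith
    have hnotS : a ∉ S := fun hmem => absurd (le_csSup hbdd hmem) (not_le.mpr haa)
    rw [hS] at hnotS
    simp only [mem_setOf_eq, not_and, not_le] at hnotS
    exact hnotS ha
  refine ⟨a₀, by linarith, ?_, ?_⟩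
  · -- part (i)
    intro a ha haa
    obtain ⟨hmem, hgfix⟩ := hfix a ha
    have hD := hlt a ha haa
    have huniq := unique_fp_of_D_lt ha hb0 hmem hgfix hD
    have hconv := g_orbit_conv ha hgfix huniq
    exact ⟨⟨hgfix, univ, isOpen_univ, mem_univ _, fun y _ => hconv y⟩,
      fun x _ => hconv x⟩
  · -- part (ii)
    intro a haa
    have ha : 0 < a := by linarith
    obtain ⟨hmem, hgfix⟩ := hfix a ha
    have hD := hgt a haa
    obtain ⟨p, q, hpx, hxq, hgp, hgq, hclass⟩ := cycle_of_D_gt ha hmem hgfix hD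
    obtain ⟨convp, convq⟩ := conv_cycle ha hmem hgfix hD hpx hxq hgp hgq hclass
    have hpp : g a b (g a b p) = p := by rw [hgp, hgq]
    constructor
    · -- repelling
      refine ⟨hgfix, Ioo ((p + xbar a)/2) ((xbar a + q)/2), isOpen_Ioo,
        ⟨by linarith, by linarith⟩, ?_⟩
      intro y hy hyne
      rcases lt_or_gt_of_ne hyne with h | h
      · have hten := convp y h
        have hev : ∀ᶠ n in atTop,
            (fun x => g a b (g a b x))^[n] y < (p + xbar a)/2 :=
          hten.eventually_lt_const (by linarith)
        obtain ⟨n, hn⟩ := hev.exists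
        refine ⟨2*n, ?_⟩
        rw [iterate_two_mul]
        intro hmem2
        exact absurd hn (not_lt.mpr (le_of_lt hmem2.1))
      · have hten := convq y h
        have hev : ∀ᶠ n in atTop,
            (xbar a + q)/2 < (fun x => g a b (g a b x))^[n] y :=
          hten.eventually_const_lt (by linarith)
        obtain ⟨n, hn⟩ := hev.exists
        refine ⟨2*n, ?_⟩
        rw [iterate_two_mul]
        intro hmem2
        exact absurd hn (not_lt.mpr (le_of_lt hmem2.2))
    · refine ⟨p, q, ne_of_lt (lt_trans hpx hxq), hgp, hgq, ?_, ?_, ?_⟩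
      · -- attracting period-2 point
        exact ⟨hpp, Iio (xbar a), isOpen_Iio, hpx, fun y hy => convp y hy⟩
      · -- countable exceptional set
        have hsub : {x | x ∈ Set.Icc (0:ℝ) 1 ∧ ∃ n : ℕ, (g a b)^[n] x = xbar a} ⊆
            {xbar a} := by
          rintro x ⟨_, n, hn⟩
          have hfixiter : (g a b)^[n] (xbar a) = xbar a :=
            Function.iterate_fixed hgfix n
          have hinj : Function.Injective ((g a b)^[n]) :=
            Function.Injective.iterate (g_anti_s11 ha b).injective n
          have : x = xbar a := hinj (by rw [hn, hfixiter])
          simp [this]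
        exact (countable_singleton (xbar a)).mono hsub
      · -- trichotomy of orbits
        intro x hx
        rcases lt_trichotomy x (xbar a) with h | h | h
        · right; left
          have := convp x h
          have heq : (fun n => (g a b)^[2*n] x) =
              fun n => (fun y => g a b (g a b y))^[n] x :=
            funext (fun n => iterate_two_mul a b n x)
          rw [heq]
          exact this
        · left
          exact ⟨0, by simpa using h⟩
        · right; right
          have := convq x h
          have heq : (fun n => (g a b)^[2*n] x) =
              fun n => (fun y => g a b (g a b y))^[n] x :=
            funext (fun n => iterate_two_mul a b n x)
          rw [heq]
          exact this
end

section
/- Let b ∈ (0,1), σ ∈ [0,1), and F_a(y) = (1−σ)·y + 1/(exp(a·y)+1) − b. For every ε > 0 there exists α(ε) > 0 such that for all a ≥ α(ε) and all x ∈ ℝ with |x| ≥ ε, the derivative satisfies 0 ≤ F_a′(x) < 1 − σ. -/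
open Real Filter Set

lemma F_hasDerivAt (a b σ x : ℝ) :
    HasDerivAt (F a b σ) ((1 - σ) - a * Real.exp (a * x) / (Real.exp (a * x) + 1) ^ 2) x := by
  have hne : Real.exp (a * x) + 1 ≠ 0 := by positivity
  have h1 : HasDerivAt (fun y : ℝ => (1 - σ) * y) (1 - σ) x :=
    (hasDerivAt_id x).const_mul _ |>.congr_deriv (by ring)
  have h2 : HasDerivAt (fun y : ℝ => Real.exp (a * y) + 1) (a * Real.exp (a * x)) x := by
    have := ((hasDerivAt_id x).const_mul a).exp
    simpa [mul_comm] using this.add_const 1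
  have h3 : HasDerivAt (fun y : ℝ => (Real.exp (a * y) + 1)⁻¹)
      (-(a * Real.exp (a * x)) / (Real.exp (a * x) + 1) ^ 2) x := h2.inv hne
  have := (h1.add h3).sub_const b
  have hfun : F a b σ = fun x => ((fun y => (1 - σ) * y) + fun y => (Real.exp (a * y) + 1)⁻¹) x - b := by
    ext y; simp [F, one_div]
  rw [hfun]
  exact this.congr_deriv (by ring)

/-- Away from the origin the derivative of `F_a` lies in `[0, 1-σ)` for all
sufficiently large `a`. -/
theorem deriv_bounds_away_from_zero (b σ : ℝ) (hb : b ∈ Set.Ioo (0:ℝ) 1)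
    (hσ : σ ∈ Set.Ico (0:ℝ) 1) :
    ∀ ε > (0:ℝ), ∃ α > (0:ℝ), ∀ a : ℝ, α ≤ a → ∀ x : ℝ, ε ≤ |x| →
      0 ≤ deriv (F a b σ) x ∧ deriv (F a b σ) x < 1 - σ := by
  intro ε hε
  have hσ1 : 0 < 1 - σ := by linarith [hσ.2]
  refine ⟨max 1 (4 / (ε ^ 2 * (1 - σ))), lt_max_of_lt_left one_pos, ?_⟩
  intro a ha x hx
  have ha1 : (1:ℝ) ≤ a := le_trans (le_max_left _ _) ha
  have ha0 : 0 < a := by linarith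
  have ha4 : 4 / (ε ^ 2 * (1 - σ)) ≤ a := le_trans (le_max_right _ _) ha
  set E := Real.exp (a * x) with hE
  have hE0 : 0 < E := Real.exp_pos _
  have hderiv : deriv (F a b σ) x = (1 - σ) - a * E / (E + 1) ^ 2 :=
    (F_hasDerivAt a b σ x).deriv
  -- key bound:  E / (E+1)^2 ≤ exp (-(a * |x|))
  have hbound : E / (E + 1) ^ 2 ≤ Real.exp (-(a * |x|)) := by
    rcases abs_cases x with ⟨h1, h2⟩ | ⟨h1, h2⟩
    · -- x ≥ 0, |x| = x
      rw [h1, Real.exp_neg, ← hE]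
      have : E / (E + 1) ^ 2 ≤ E / E ^ 2 := by
        apply div_le_div_of_nonneg_left hE0.le (by positivity)
        nlinarith
      calc E / (E + 1) ^ 2 ≤ E / E ^ 2 := this
        _ = E⁻¹ := by field_simp
    · -- x < 0, |x| = -x
      rw [h1]
      have : -(a * -x) = a * x := by ring
      rw [this, ← hE]
      have h2 : (E + 1) ^ 2 ≥ 1 := by nlinarith
      calc E / (E + 1) ^ 2 ≤ E / 1 := by
            apply div_le_div_of_nonneg_left hE0.le one_pos h2
        _ = E := div_one E
  -- exp (a*|x|) ≥ (a*ε)^2 / 4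
  have haε : a * ε ≤ a * |x| := mul_le_mul_of_nonneg_left hx ha0.le
  have haε0 : 0 < a * ε := by positivity
  have hexp : (a * ε) ^ 2 / 4 ≤ Real.exp (a * |x|) := by
    have h1 : 1 + a * |x| / 2 ≤ Real.exp (a * |x| / 2) := by linarith [Real.add_one_le_exp (a * |x| / 2)]
    have hpos : 0 ≤ a * |x| := le_of_lt (lt_of_lt_of_le haε0 haε)
    have hsq : Real.exp (a * |x|) = Real.exp (a * |x| / 2) ^ 2 := by
      rw [← Real.exp_nat_mul]; norm_num; ring_nf
    have h2 : (1 + a * |x| / 2) ^ 2 ≤ Real.exp (a * |x| / 2) ^ 2 :=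
      pow_le_pow_left₀ (by positivity) h1 2
    nlinarith
  have hexp2 : Real.exp (-(a * |x|)) ≤ 4 / (a * ε) ^ 2 := by
    rw [Real.exp_neg]
    rw [inv_le_iff_one_le_mul₀ (Real.exp_pos _)]
    rw [div_mul_eq_mul_div, le_div_iff₀ (by positivity)]
    nlinarith
  have hterm : a * E / (E + 1) ^ 2 ≤ 1 - σ := by
    have h1 : a * E / (E + 1) ^ 2 ≤ a * (4 / (a * ε) ^ 2) := by
      rw [mul_div_assoc]
      exact mul_le_mul_of_nonneg_left (hbound.trans hexp2) ha0.le
    have h2 : a * (4 / (a * ε) ^ 2) = 4 / (a * ε ^ 2) := by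
      field_simp
    have h3 : 4 / (a * ε ^ 2) ≤ 1 - σ := by
      rw [div_le_iff₀ (by positivity)]
      rw [div_le_iff₀ (by positivity)] at ha4
      nlinarith
    linarith [h1, h2 ▸ h1]
  have htermpos : 0 < a * E / (E + 1) ^ 2 := by positivity
  rw [hderiv]
  constructor <;> linarith
end
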